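/- arXiv:1107.4751 — 4 statements merged into one kernel-verified Lean document; each statement's English description precedes it below -/
import Mathlib

section
/- Define the untyped lambda calculus as the nested datatype ULC : Type → Type with constructors Var : V → ULC V, Abs : ULC (Option V) → ULC V, and App : ULC V → ULC V → ULC V. Define renaming rename : (V → W) → ULC V → ULC W and simultaneous substitution bind : (V → ULC W) → ULC V → ULC W by structural recursion, where under an Abs a substitution f : V → ULC W is lifted to Option V → ULC (Option W) by sending the new variable to Var none and v to rename some (f v). Then (ULC, Var, bind) satisfies the monad laws: bind f (Var v) = f v; bind Var t = t; and bind g (bind f t) = bind (fun v => bind g (f v)) t, for all t : ULC V, f : V → ULC W, g : W → ULC X. -/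
/-- Untyped lambda calculus as a nested datatype: the body of an abstraction lives in
the context extended by one fresh variable (`Option V`). -/
inductive ULC : Type → Type 1
  | Var {V : Type} : V → ULC V
  | Abs {V : Type} : ULC (Option V) → ULC V
  | App {V : Type} : ULC V → ULC V → ULC V

/-- Renaming of free variables. -/
def ULC.rename : {V W : Type} → (V → W) → ULC V → ULC W
  | _, _, f, .Var v => .Var (f v)
  | _, _, f, .Abs t => .Abs (t.rename (Option.map f))
  | _, _, f, .App s t => .App (s.rename f) (t.rename f)

/-- Lifting a substitution under a binder: the new variable is sent to itself, and the
image of an old variable is weakened. -/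
def ULC.lift {V W : Type} (f : V → ULC W) : Option V → ULC (Option W)
  | none => .Var none
  | some v => (f v).rename some

/-- Simultaneous substitution. -/
def ULC.bind : {V W : Type} → (V → ULC W) → ULC V → ULC W
  | _, _, f, .Var v => f v
  | _, _, f, .Abs t => .Abs (t.bind (ULC.lift f))
  | _, _, f, .App s t => .App (s.bind f) (t.bind f)

/-!
Each law is proved by structural induction on the term. Under `Abs` the substitution is
replaced by its lift, so associativity needs `lift (bind g ∘ f) = bind (lift g) ∘ lift f`;
on old variables this says that weakening `rename some` commutes with substitution, which
comes from the fusion laws for `rename` followed by `bind` and `bind` followed by `rename`.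
-/

namespace ULC

theorem rename_rename : ∀ {V W X : Type} (t : ULC V) (f : V → W) (g : W → X),
    (t.rename f).rename g = t.rename (g ∘ f)
  | _, _, _, .Var _, _, _ => rfl
  | _, _, _, .Abs t, f, g => by simp only [rename, rename_rename t, Option.map_comp_map]
  | _, _, _, .App s t, f, g => by simp only [rename, rename_rename s, rename_rename t]

theorem lift_comp {V W X : Type} (f : V → W) (g : W → ULC X) :
    lift (g ∘ f) = lift g ∘ Option.map f := by
  funext v; cases v <;> rfl

theorem bind_rename : ∀ {V W X : Type} (t : ULC V) (f : V → W) (g : W → ULC X),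
    (t.rename f).bind g = t.bind (g ∘ f)
  | _, _, _, .Var _, _, _ => rfl
  | _, _, _, .Abs t, f, g => by simp only [rename, bind, bind_rename t, lift_comp]
  | _, _, _, .App s t, f, g => by simp only [rename, bind, bind_rename s, bind_rename t]

theorem lift_rename_comp {V W X : Type} (f : V → ULC W) (g : W → X) :
    lift (rename g ∘ f) = rename (Option.map g) ∘ lift f := by
  funext v
  cases v with
  | none => rfl
  | some v => simp only [Function.comp_apply, lift, rename_rename]; rfl

theorem rename_bind : ∀ {V W X : Type} (t : ULC V) (f : V → ULC W) (g : W → X),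
    (t.bind f).rename g = t.bind (rename g ∘ f)
  | _, _, _, .Var _, _, _ => rfl
  | _, _, _, .Abs t, f, g => by simp only [bind, rename, rename_bind t, lift_rename_comp]
  | _, _, _, .App s t, f, g => by simp only [rename, bind, rename_bind s, rename_bind t]

theorem lift_var {V : Type} : lift (Var (V := V)) = Var := by
  funext v; cases v <;> rfl

theorem bind_var : ∀ {V : Type} (t : ULC V), t.bind Var = t
  | _, .Var _ => rfl
  | _, .Abs t => by simp only [bind, lift_var, bind_var t]
  | _, .App s t => by simp only [bind, bind_var s, bind_var t]

theorem lift_bind_comp {V W X : Type} (f : V → ULC W) (g : W → ULC X) :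
    lift (bind g ∘ f) = bind (lift g) ∘ lift f := by
  funext v
  cases v with
  | none => rfl
  | some v => simp only [Function.comp_apply, lift, bind_rename, rename_bind]; rfl

theorem bind_bind : ∀ {V W X : Type} (t : ULC V) (f : V → ULC W) (g : W → ULC X),
    (t.bind f).bind g = t.bind (bind g ∘ f)
  | _, _, _, .Var _, _, _ => rfl
  | _, _, _, .Abs t, f, g => by simp only [bind, bind_bind t, lift_bind_comp]
  | _, _, _, .App s t, f, g => by simp only [bind, bind_bind s, bind_bind t]

end ULC

/-- `(ULC, Var, bind)` satisfies the three monad laws. -/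
theorem ULC.monad_laws :
    (∀ {V W : Type} (f : V → ULC W) (v : V), ULC.bind f (.Var v) = f v) ∧
    (∀ {V : Type} (t : ULC V), ULC.bind .Var t = t) ∧
    (∀ {V W X : Type} (t : ULC V) (f : V → ULC W) (g : W → ULC X),
      ULC.bind g (ULC.bind f t) = ULC.bind (fun v => ULC.bind g (f v)) t) := by
  exact ⟨fun _ _ => rfl, ULC.bind_var, ULC.bind_bind⟩
end

section
/- Let T ::= * | T ⇒ T be the set of simple types. Define the simply-typed lambda calculus as the intrinsically typed inductive family SLC : (T → Type) → (T → Type) with constructors Var : V t → SLC V t, Abs : SLC (V + {·:s}) t → SLC V (s ⇒ t), and App : SLC V (s ⇒ t) → SLC V s → SLC V t, where V + {·:s} denotes the context V extended by one fresh variable of type s. Define type-preserving simultaneous substitution bind : (∀ t, V t → SLC W t) → (∀ t, SLC V t → SLC W t) by structural recursion (lifting the substitution under Abs). Then (SLC, Var, bind) satisfies the monad laws: bind f (Var v) = f v; bind Var a = a; and bind g (bind f a) = bind (fun t v => bind g (f t v)) a. -/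
/-!
Associativity of substitution is proved by structural induction; the only nontrivial case is
`Abs`, where one must know that lifting a substitution under a binder commutes with composition.
For lifted substitutions this reduces to weakening (renaming along `Sum.inl`) commuting with
substitution, which in turn needs the fusion laws between renaming and substitution in all orders.
-/

/-- Simple types: `T ::= * | T ⇒ T`. -/
inductive Ty : Type
  | star : Ty
  | arr : Ty → Ty → Ty

/-- The context `V` extended by one fresh variable of type `s`. -/
def ext (V : Ty → Type) (s : Ty) : Ty → Type :=
  fun t => V t ⊕ PLift (t = s)

/-- Intrinsically typed simply-typed lambda calculus. -/
inductive SLC : (Ty → Type) → Ty → Type 1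
  | Var {V : Ty → Type} {t : Ty} : V t → SLC V t
  | Abs {V : Ty → Type} {s t : Ty} : SLC (ext V s) t → SLC V (.arr s t)
  | App {V : Ty → Type} {s t : Ty} : SLC V (.arr s t) → SLC V s → SLC V t

/-- Lifting a renaming to an extended context. -/
def extMap {V W : Ty → Type} (f : ∀ t, V t → W t) (s : Ty) :
    ∀ t, ext V s t → ext W s t :=
  fun t x => x.elim (fun v => .inl (f t v)) .inr

/-- Renaming of free variables (functoriality). -/
def SLC.rename : {V W : Ty → Type} → (∀ t, V t → W t) → ∀ {t}, SLC V t → SLC W t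
  | _, _, f, _, .Var v => .Var (f _ v)
  | _, _, f, _, .Abs b => .Abs (b.rename (extMap f _))
  | _, _, f, _, .App a b => .App (a.rename f) (b.rename f)

/-- Lifting a substitution under a binder. -/
def SLC.lift {V W : Ty → Type} (f : ∀ t, V t → SLC W t) (s : Ty) :
    ∀ t, ext V s t → SLC (ext W s) t :=
  fun t x =>
    match x with
    | .inl v => (f t v).rename (fun _ w => Sum.inl w)
    | .inr h => .Var (.inr h)

/-- Type-preserving simultaneous substitution. -/
def SLC.bind : {V W : Ty → Type} → (∀ t, V t → SLC W t) → ∀ {t}, SLC V t → SLC W t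
  | _, _, f, _, .Var v => f _ v
  | _, _, f, _, .Abs b => .Abs (b.bind (SLC.lift f _))
  | _, _, f, _, .App a b => .App (a.bind f) (b.bind f)


namespace SLC

variable {V W X : Ty → Type} {s t : Ty}

theorem extMap_extMap (f : ∀ t, V t → W t) (g : ∀ t, W t → X t) (x : ext V s t) :
    extMap g s t (extMap f s t x) = extMap (fun t v => g t (f t v)) s t x := by
  cases x <;> rfl

theorem lift_extMap (f : ∀ t, V t → W t) (g : ∀ t, W t → SLC X t) (x : ext V s t) :
    lift g s t (extMap f s t x) = lift (fun t v => g t (f t v)) s t x := by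
  cases x <;> rfl

theorem rename_rename (f : ∀ t, V t → W t) (g : ∀ t, W t → X t) (a : SLC V t) :
    (a.rename f).rename g = a.rename (fun t v => g t (f t v)) := by
  induction a generalizing W X with
  | Var v => rfl
  | Abs b ih => simp only [rename, ih, extMap_extMap]
  | App a b iha ihb => simp only [rename, iha, ihb]

theorem bind_rename (f : ∀ t, V t → W t) (g : ∀ t, W t → SLC X t) (a : SLC V t) :
    (a.rename f).bind g = a.bind (fun t v => g t (f t v)) := by
  induction a generalizing W X with
  | Var v => rfl
  | Abs b ih => simp only [rename, bind, ih, lift_extMap]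
  | App a b iha ihb => simp only [rename, bind, iha, ihb]

theorem rename_lift (f : ∀ t, V t → SLC W t) (g : ∀ t, W t → X t) (x : ext V s t) :
    (lift f s t x).rename (extMap g s) = lift (fun t v => (f t v).rename g) s t x := by
  cases x with
  | inl v => exact (rename_rename _ _ _).trans (rename_rename g (fun _ w => Sum.inl w) (f t v)).symm
  | inr h => rfl

theorem rename_bind (f : ∀ t, V t → SLC W t) (g : ∀ t, W t → X t) (a : SLC V t) :
    (a.bind f).rename g = a.bind (fun t v => (f t v).rename g) := by
  induction a generalizing W X with
  | Var v => rfl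
  | Abs b ih => simp only [bind, rename, ih, rename_lift]
  | App a b iha ihb => simp only [bind, rename, iha, ihb]

theorem bind_lift (f : ∀ t, V t → SLC W t) (g : ∀ t, W t → SLC X t) (x : ext V s t) :
    (lift f s t x).bind (lift g s) = lift (fun t v => (f t v).bind g) s t x := by
  cases x with
  | inl v => exact (bind_rename _ _ _).trans (rename_bind g (fun _ w => Sum.inl w) (f t v)).symm
  | inr h => rfl

theorem bind_bind (f : ∀ t, V t → SLC W t) (g : ∀ t, W t → SLC X t) (a : SLC V t) :
    (a.bind f).bind g = a.bind (fun t v => (f t v).bind g) := by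
  induction a generalizing W X with
  | Var v => rfl
  | Abs b ih => simp only [bind, ih, bind_lift]
  | App a b iha ihb => simp only [bind, iha, ihb]

theorem lift_var : lift (fun _ v => Var v) s = fun t (x : ext V s t) => Var x := by
  funext t x
  cases x <;> rfl

theorem bind_var (a : SLC V t) : a.bind (fun _ v => Var v) = a := by
  induction a with
  | Var v => rfl
  | Abs b ih => simp only [bind, lift_var, ih]
  | App a b iha ihb => simp only [bind, iha, ihb]

end SLC

/-- `(SLC, Var, bind)` satisfies the three monad laws. -/
theorem SLC.monad_laws :
    (∀ {V W : Ty → Type} (f : ∀ t, V t → SLC W t) {t} (v : V t),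
      SLC.bind f (.Var v) = f t v) ∧
    (∀ {V : Ty → Type} {t} (a : SLC V t), SLC.bind (fun _ v => .Var v) a = a) ∧
    (∀ {V W X : Ty → Type} {t} (a : SLC V t) (f : ∀ t, V t → SLC W t)
      (g : ∀ t, W t → SLC X t),
      SLC.bind g (SLC.bind f a) = SLC.bind (fun t v => SLC.bind g (f t v)) a) := by
  exact ⟨fun _ _ _ => rfl, SLC.bind_var, fun a f g => SLC.bind_bind f g a⟩
end

section
/- Let (S, Σ) be a typed signature: S : J → ℕ an algebraic signature for types, and Σ a family of classic term arities over S, each of some degree n. Then the category of representations of (S, Σ) — whose objects are S-monads (T, P) equipped with, for every arity α ∈ Σ of degree n as below and every t ∈ T^n, a module morphism α^P_t : dom(α, P)_t → cod(α, P)_t, and whose morphisms are S-monad morphisms (g, f) making, for every arity and every t ∈ T^n, the square relating α^P_t and α^R_{g∘t} via the term translation f commute — has an initial object. Its underlying type representation is the initial representation Ŝ of S, and its underlying monad is the term monad on [Ŝ, Type] generated inductively by one constructor family α_t(V) : Π_i P^{ℓ_i(Ŝ,t)}(V)_{σ_i(Ŝ,t)} → P(V)_{σ_0(Ŝ,t)}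 for each arity α ∈ Σ together with variables-as-terms. -/
open CategoryTheory

/-! ### Algebraic signatures and their representations (for types/sorts) -/

/-- A representation of the algebraic signature `S : J → ℕ`. -/
structure SRep {J : Type} (S : J → ℕ) : Type 1 where
  carrier : Type
  op : ∀ j : J, (Fin (S j) → carrier) → carrier

/-- A morphism of representations of `S`. -/
structure SRepHom {J : Type} {S : J → ℕ} (A B : SRep S) where
  toFun : A.carrier → B.carrier
  compat : ∀ (j : J) (a : Fin (S j) → A.carrier),
      toFun (A.op j a) = B.op j (fun i => toFun (a i))

/-- The types freely generated by `S`: the initial representation `Ŝ`. -/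
inductive What {J : Type} (S : J → ℕ) : Type
  | mk (j : J) (a : Fin (S j) → What S) : What S

/-- `Ŝ` as a representation of `S`. -/
def initSRep {J : Type} (S : J → ℕ) : SRep S :=
  ⟨What S, fun j a => What.mk j a⟩

/-! ### Types of degree `n` -/

/-- Types of degree `n` over `S`: types freely generated by `S` together with `n`
free type variables. -/
inductive TyDeg {J : Type} (S : J → ℕ) (n : ℕ) : Type
  | var : Fin n → TyDeg S n
  | op (j : J) (args : Fin (S j) → TyDeg S n) : TyDeg S n

/-- Evaluation of a type of degree `n` in a representation `A` of `S`, at a vector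
`t ∈ A^n` of values for the type variables. -/
def TyDeg.eval {J : Type} {S : J → ℕ} (A : SRep S) {n : ℕ}
    (t : Fin n → A.carrier) : TyDeg S n → A.carrier
  | .var i => t i
  | .op j args => A.op j (fun i => (args i).eval A t)

theorem TyDeg.eval_comm {J : Type} {S : J → ℕ} {A B : SRep S} (g : SRepHom A B)
    {n : ℕ} (t : Fin n → A.carrier) :
    ∀ s : TyDeg S n,
      TyDeg.eval B (fun i => g.toFun (t i)) s = g.toFun (TyDeg.eval A t s)
  | .var i => rfl
  | .op j args => by
      simp only [TyDeg.eval, g.compat]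
      congr 1
      funext i
      exact TyDeg.eval_comm g t (args i)

theorem TyDeg.evalList_comm {J : Type} {S : J → ℕ} {A B : SRep S} (g : SRepHom A B)
    {n : ℕ} (t : Fin n → A.carrier) (l : List (TyDeg S n)) :
    l.map (TyDeg.eval B (fun i => g.toFun (t i))) =
      (l.map (TyDeg.eval A t)).map g.toFun := by
  rw [List.map_map]
  apply List.map_congr_left
  intro s _
  exact TyDeg.eval_comm g t s

/-! ### Contexts, context extension, retyping -/

/-- The context `V` extended by one fresh variable of sort `u`. -/
def extC {T : Type} (V : T → Type) (u : T) : T → Type :=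
  fun t => V t ⊕ PLift (t = u)

/-- Functorial action of context extension. -/
def extCMap {T : Type} {V W : T → Type} (f : V ⟶ W) (u : T) :
    extC V u ⟶ extC W u :=
  fun t => TypeCat.ofHom fun x => x.elim (fun v => Sum.inl (f t v)) Sum.inr

/-- The context `V` extended by a fresh variable for each element of a list of
sorts. -/
def extList {T : Type} (V : T → Type) : List T → (T → Type)
  | [] => V
  | u :: l => extC (extList V l) u

/-- Functorial action of iterated context extension. -/
def extListMap {T : Type} {V W : T → Type} (f : V ⟶ W) :
    ∀ l : List T, extList V l ⟶ extList W l
  | [] => f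
  | u :: l => extCMap (extListMap f l) u

/-- Object part of the retyping functor along `g : T → T'`. -/
def retypeObj {T T' : Type} (g : T → T') (V : T → Type) : T' → Type :=
  fun t' => Σ t : {t : T // g t = t'}, V t.1

/-- Morphism part of the retyping functor along `g : T → T'`. -/
def retypeMap {T T' : Type} (g : T → T') {V W : T → Type} (f : V ⟶ W) :
    retypeObj g V ⟶ retypeObj g W :=
  fun _ => TypeCat.ofHom fun p => ⟨p.1, f p.1.1 p.2⟩

/-- The colax structure of context extension over a monad `P`:
`(P V)^{*u} ⟶ P (V^{*u})`. -/
def gammaC {T : Type} (P : CategoryTheory.Monad (T → Type)) (u : T)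
    (V : T → Type) : extC (P.obj V) u ⟶ P.obj (extC V u) :=
  fun t => TypeCat.ofHom fun x =>
    x.elim (fun p => P.map (fun _ => TypeCat.ofHom fun v => (Sum.inl v : extC V u _)) t p)
      (fun h => P.η.app (extC V u) t (Sum.inr h))

/-- The colax structure of iterated context extension over a monad `P`. -/
def gammaList {T : Type} (P : CategoryTheory.Monad (T → Type)) :
    ∀ (l : List T) (V : T → Type), extList (P.obj V) l ⟶ P.obj (extList V l)
  | [], V => 𝟙 (P.obj V)
  | u :: l, V => extCMap (gammaList P l V) u ≫ gammaC P u (extList V l)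

/-- Retyping commutes with context extension by one variable. -/
def dC {T T' : Type} (g : T → T') (V : T → Type) (u : T) :
    retypeObj g (extC V u) ⟶ extC (retypeObj g V) (g u) :=
  fun _ => TypeCat.ofHom fun p =>
    match p with
    | ⟨⟨t, ht⟩, Sum.inl v⟩ => Sum.inl ⟨⟨t, ht⟩, v⟩
    | ⟨⟨t, ht⟩, Sum.inr h⟩ => Sum.inr ⟨by rw [← ht]; exact congrArg g h.down⟩

/-- Retyping commutes with iterated context extension. -/
def dList {T T' : Type} (g : T → T') (V : T → Type) :
    ∀ l : List T, retypeObj g (extList V l) ⟶ extList (retypeObj g V) (l.map g)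
  | [] => 𝟙 (retypeObj g V)
  | u :: l => dC g (extList V l) u ≫ extCMap (dList g V l) (g u)

/-! ### Classic arities, typed signatures and their representations -/

/-- A classic arity of degree `deg` over `S`: a list of pairs (binding list, sort of
argument) and an output sort, all built from types of degree `deg`. -/
structure ClassicArity {J : Type} (S : J → ℕ) where
  deg : ℕ
  args : List (List (TyDeg S deg) × TyDeg S deg)
  out : TyDeg S deg

/-- The list of sorts bound in the `k`-th argument, evaluated in `A` at `t`. -/
def argCtx {J : Type} {S : J → ℕ} (α : ClassicArity S) (A : SRep S)
    (t : Fin α.deg → A.carrier) (k : Fin α.args.length) : List A.carrier :=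
  (α.args.get k).1.map (TyDeg.eval A t)

/-- The sort of the `k`-th argument, evaluated in `A` at `t`. -/
def argSort {J : Type} {S : J → ℕ} (α : ClassicArity S) (A : SRep S)
    (t : Fin α.deg → A.carrier) (k : Fin α.args.length) : A.carrier :=
  TyDeg.eval A t (α.args.get k).2

/-- The output sort, evaluated in `A` at `t`. -/
def outSort {J : Type} {S : J → ℕ} (α : ClassicArity S) (A : SRep S)
    (t : Fin α.deg → A.carrier) : A.carrier :=
  TyDeg.eval A t α.out

theorem argCtx_comm {J : Type} {S : J → ℕ} {A B : SRep S} (g : SRepHom A B)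
    (α : ClassicArity S) (t : Fin α.deg → A.carrier) (k : Fin α.args.length) :
    argCtx α B (fun i => g.toFun (t i)) k = (argCtx α A t k).map g.toFun :=
  TyDeg.evalList_comm g t _

theorem argSort_comm {J : Type} {S : J → ℕ} {A B : SRep S} (g : SRepHom A B)
    (α : ClassicArity S) (t : Fin α.deg → A.carrier) (k : Fin α.args.length) :
    argSort α B (fun i => g.toFun (t i)) k = g.toFun (argSort α A t k) :=
  TyDeg.eval_comm g t _

theorem outSort_comm {J : Type} {S : J → ℕ} {A B : SRep S} (g : SRepHom A B)
    (α : ClassicArity S) (t : Fin α.deg → A.carrier) :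
    outSort α B (fun i => g.toFun (t i)) = g.toFun (outSort α A t) :=
  TyDeg.eval_comm g t _

/-- A representation of the term signature `Sg` over a fixed representation `A` of the
type signature `S`: an `S`-monad `P` on `[A, Type]` together with, for each arity
`α ∈ Sg` of degree `n` and each `t ∈ A^n`, a module morphism
`dom(α, P)_t → cod(α, P)_t`: a family of maps from the product of the fibres (at the
argument sorts) of the derived modules of `P` to the fibre of `P` at the output sort,
natural in the context and compatible with the module substitutions. -/
structure SigRepOn {J I : Type} (S : J → ℕ) (Sg : I → ClassicArity S)
    (A : SRep S) where
  P : CategoryTheory.Monad (A.carrier → Type)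
  rep : ∀ (i : I) (t : Fin (Sg i).deg → A.carrier) (V : A.carrier → Type),
      (∀ k : Fin (Sg i).args.length,
        P.obj (extList V (argCtx (Sg i) A t k)) (argSort (Sg i) A t k)) →
      P.obj V (outSort (Sg i) A t)
  rep_natural : ∀ (i : I) (t : Fin (Sg i).deg → A.carrier)
      {V W : A.carrier → Type} (f : V ⟶ W)
      (a : ∀ k : Fin (Sg i).args.length,
        P.obj (extList V (argCtx (Sg i) A t k)) (argSort (Sg i) A t k)),
      rep i t W (fun k => P.map (extListMap f (argCtx (Sg i) A t k))
          (argSort (Sg i) A t k) (a k)) =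
        P.map f (outSort (Sg i) A t) (rep i t V a)
  rep_mod : ∀ (i : I) (t : Fin (Sg i).deg → A.carrier) (V : A.carrier → Type)
      (a : ∀ k : Fin (Sg i).args.length,
        P.obj (extList (P.obj V) (argCtx (Sg i) A t k)) (argSort (Sg i) A t k)),
      rep i t V (fun k => P.μ.app (extList V (argCtx (Sg i) A t k))
          (argSort (Sg i) A t k)
          (P.map (gammaList P (argCtx (Sg i) A t k) V) (argSort (Sg i) A t k)
            (a k))) =
        P.μ.app V (outSort (Sg i) A t) (rep i t (P.obj V) a)

/-- A representation of the typed signature `(S, Sg)`. -/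
structure SigRep {J I : Type} (S : J → ℕ) (Sg : I → ClassicArity S) where
  sorts : SRep S
  str : SigRepOn S Sg sorts

/-- A morphism of representations of `(S, Sg)`: a morphism `g` of representations of
`S` together with a colax monad morphism `f` over the retyping functor along `g`,
compatible with the representations of all the arities (modulo the canonical
identifications given by `g` and by the commutation of retyping with context
extension). -/
structure SigRepHom {J I : Type} {S : J → ℕ} {Sg : I → ClassicArity S}
    (X Y : SigRep S Sg) where
  g : SRepHom X.sorts Y.sorts
  f : ∀ V : X.sorts.carrier → Type,
      retypeObj g.toFun (X.str.P.obj V) ⟶ Y.str.P.obj (retypeObj g.toFun V)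
  f_natural : ∀ {V W : X.sorts.carrier → Type} (k : V ⟶ W),
      retypeMap g.toFun (X.str.P.map k) ≫ f W =
        f V ≫ Y.str.P.map (retypeMap g.toFun k)
  f_unit : ∀ V : X.sorts.carrier → Type,
      retypeMap g.toFun (X.str.P.η.app V) ≫ f V =
        Y.str.P.η.app (retypeObj g.toFun V)
  f_mul : ∀ V : X.sorts.carrier → Type,
      retypeMap g.toFun (X.str.P.μ.app V) ≫ f V =
        f (X.str.P.obj V) ≫ Y.str.P.map (f V) ≫
          Y.str.P.μ.app (retypeObj g.toFun V)
  rep_compat : ∀ (i : I) (t : Fin (Sg i).deg → X.sorts.carrier)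
      (V : X.sorts.carrier → Type)
      (a : ∀ k : Fin (Sg i).args.length,
        X.str.P.obj (extList V (argCtx (Sg i) X.sorts t k))
          (argSort (Sg i) X.sorts t k)),
      f V (g.toFun (outSort (Sg i) X.sorts t))
          ⟨⟨outSort (Sg i) X.sorts t, rfl⟩, X.str.rep i t V a⟩ =
        cast (by rw [outSort_comm])
          (Y.str.rep i (fun m => g.toFun (t m)) (retypeObj g.toFun V)
            (fun k => cast (by rw [argCtx_comm, argSort_comm])
              (Y.str.P.map (dList g.toFun V (argCtx (Sg i) X.sorts t k))
                (g.toFun (argSort (Sg i) X.sorts t k))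
                (f (extList V (argCtx (Sg i) X.sorts t k))
                  (g.toFun (argSort (Sg i) X.sorts t k))
                  ⟨⟨argSort (Sg i) X.sorts t k, rfl⟩, a k⟩))))

/-- The term monad associated to `(S, Sg)`: the inductive family of terms over a
context `V`, generated by variables-as-terms and by one constructor family for each
arity of `Sg`, indexed by the instantiations of its type variables. -/
inductive Tm {J I : Type} (S : J → ℕ) (Sg : I → ClassicArity S) :
    (What S → Type) → What S → Type 1
  | var {V : What S → Type} {s : What S} : V s → Tm S Sg V s
  | con (i : I) (t : Fin (Sg i).deg → What S) {V : What S → Type}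
      (a : ∀ k : Fin (Sg i).args.length,
        Tm S Sg (extList V (argCtx (Sg i) (initSRep S) t k))
          (argSort (Sg i) (initSRep S) t k)) :
      Tm S Sg V (outSort (Sg i) (initSRep S) t)


/-!
Initiality of `Ŝ` among representations of `S` is structural recursion (`What.fold`). Terms
form a monad under simultaneous substitution and the constructors are module morphisms for it,
which makes them a representation of `(S, Sg)` over `Ŝ`. The family `Tm S Sg V s` lives in `Type 1`
only because its context index varies; coding terms injectively by untyped trees over the
extensions of a fixed context (`TmCode`) shows it is small, and the monad is taken on the shrunk
fibres.

Given a representation `R` and any morphism of sorts `g : Ŝ → R`, terms are translated along `g`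
by structural recursion, variables going to units and each constructor `α_t` to the operation
`α_{g ∘ t}` of `R`. Since the translation commutes with renaming and with substitution, it is a
colax monad morphism compatible with the arities. Conversely, the unit law and the compatibility
square for the constructors force every morphism with sort component `g` to be this translation,
and `g` is forced to be the fold.
-/

section Contexts

variable {T : Type}

theorem famHom_ext {V W : T → Type} {f f' : V ⟶ W} (h : ∀ t x, f t x = f' t x) : f = f' :=
  funext fun t => ConcreteCategory.hom_ext _ _ (h t)

theorem extCMap_id (V : T → Type) (u : T) : extCMap (𝟙 V) u = 𝟙 (extC V u) :=
  famHom_ext fun _ x => by cases x <;> rfl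

theorem extCMap_comp {V W X : T → Type} (f : V ⟶ W) (g : W ⟶ X) (u : T) :
    extCMap (f ≫ g) u = extCMap f u ≫ extCMap g u :=
  famHom_ext fun _ x => by cases x <;> rfl

theorem extListMap_id (V : T → Type) : ∀ l : List T, extListMap (𝟙 V) l = 𝟙 (extList V l)
  | [] => rfl
  | u :: l => (congrArg (extCMap · u) (extListMap_id V l)).trans (extCMap_id _ u)

theorem extListMap_comp {V W X : T → Type} (f : V ⟶ W) (g : W ⟶ X) :
    ∀ l : List T, extListMap (f ≫ g) l = extListMap f l ≫ extListMap g l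
  | [] => rfl
  | u :: l => (congrArg (extCMap · u) (extListMap_comp f g l)).trans (extCMap_comp _ _ u)

theorem dList_natural {T' : Type} (g : T → T') {V W : T → Type} (k : V ⟶ W) :
    ∀ l : List T,
      retypeMap g (extListMap k l) ≫ dList g W l =
        dList g V l ≫ extListMap (retypeMap g k) (l.map g)
  | [] => rfl
  | u :: l => famHom_ext fun t p => by
      obtain ⟨⟨w, hw⟩, x | x⟩ := p
      · exact congrArg Sum.inl
          (ConcreteCategory.congr_hom (congrFun (dList_natural g k l) t) ⟨⟨w, hw⟩, x⟩)
      · rfl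

end Contexts

namespace Tm

variable {J I : Type} {S : J → ℕ} {Sg : I → ClassicArity S}

def rename : ∀ {V W : What S → Type}, (V ⟶ W) → ∀ {s}, Tm S Sg V s → Tm S Sg W s
  | _, _, f, _, .var v => .var (f _ v)
  | _, _, f, _, .con i t a =>
      .con i t fun k => (a k).rename (extListMap f (argCtx (Sg i) (initSRep S) t k))

def liftSubst {V W : What S → Type} (σ : ∀ s, V s → Tm S Sg W s) :
    ∀ l : List (What S), ∀ s, extList V l s → Tm S Sg (extList W l) s
  | [] => σ
  | _ :: l => fun _ x =>
      x.elim (fun v => (liftSubst σ l _ v).rename fun _ => ↾Sum.inl) fun h => .var (Sum.inr h)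

def bind : ∀ {V W : What S → Type}, (∀ s, V s → Tm S Sg W s) →
    ∀ {s}, Tm S Sg V s → Tm S Sg W s
  | _, _, σ, _, .var v => σ _ v
  | _, _, σ, _, .con i t a =>
      .con i t fun k => (a k).bind (liftSubst σ (argCtx (Sg i) (initSRep S) t k))

theorem rename_id {V : What S → Type} : ∀ {s} (x : Tm S Sg V s), x.rename (𝟙 V) = x
  | _, .var _ => rfl
  | _, .con i t a => congrArg (con i t) <| funext fun k =>
      (congrArg (rename · (a k)) (extListMap_id V _)).trans (rename_id (a k))

theorem rename_comp {V W X : What S → Type} (f : V ⟶ W) (g : W ⟶ X) :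
    ∀ {s} (x : Tm S Sg V s), x.rename (f ≫ g) = (x.rename f).rename g
  | _, .var _ => rfl
  | _, .con i t a => congrArg (con i t) <| funext fun k =>
      (congrArg (rename · (a k)) (extListMap_comp f g _)).trans (rename_comp _ _ (a k))

theorem liftSubst_comp_map {V W X : What S → Type} (f : V ⟶ W)
    (σ : ∀ s, W s → Tm S Sg X s) :
    ∀ (l : List (What S)) (s) (x : extList V l s),
      liftSubst (fun s v => σ s (f s v)) l s x = liftSubst σ l s (extListMap f l s x)
  | [], _, _ => rfl
  | _ :: l, s, Sum.inl v => congrArg (rename _) (liftSubst_comp_map f σ l s v)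
  | _ :: _, _, Sum.inr _ => rfl

theorem bind_rename {V W X : What S → Type} (f : V ⟶ W) (σ : ∀ s, W s → Tm S Sg X s) :
    ∀ {s} (x : Tm S Sg V s), (x.rename f).bind σ = x.bind fun s v => σ s (f s v)
  | _, .var _ => rfl
  | _, .con i t a => congrArg (con i t) <| funext fun k =>
      (bind_rename _ _ (a k)).trans
        (congrArg (bind · (a k)) (funext₂ fun s x => (liftSubst_comp_map f σ _ s x).symm))

theorem liftSubst_rename {V W X : What S → Type} (σ : ∀ s, V s → Tm S Sg W s) (f : W ⟶ X) :
    ∀ (l : List (What S)) (s) (x : extList V l s),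
      liftSubst (fun s v => (σ s v).rename f) l s x = (liftSubst σ l s x).rename (extListMap f l)
  | [], _, _ => rfl
  | u :: l, s, Sum.inl v => by
      change rename _ (liftSubst _ l s v) = rename (extCMap (extListMap f l) u) (rename _ _)
      rw [liftSubst_rename σ f l]
      erw [← rename_comp, ← rename_comp]
      rfl
  | _ :: _, _, Sum.inr _ => rfl

theorem rename_bind {V W X : What S → Type} (σ : ∀ s, V s → Tm S Sg W s) (f : W ⟶ X) :
    ∀ {s} (x : Tm S Sg V s), (x.bind σ).rename f = x.bind fun s v => (σ s v).rename f
  | _, .var _ => rfl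
  | _, .con i t a => congrArg (con i t) <| funext fun k =>
      (rename_bind _ _ (a k)).trans
        (congrArg (bind · (a k)) (funext₂ fun s x => (liftSubst_rename σ f _ s x).symm))

theorem liftSubst_var {V : What S → Type} :
    ∀ (l : List (What S)) (s) (x : extList V l s),
      liftSubst (fun _ v => (var v : Tm S Sg _ _)) l s x = var x
  | [], _, _ => rfl
  | _ :: l, s, Sum.inl v => congrArg (rename _) (liftSubst_var l s v)
  | _ :: _, _, Sum.inr _ => rfl

theorem bind_var {V : What S → Type} : ∀ {s} (x : Tm S Sg V s), x.bind (fun _ v => var v) = x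
  | _, .var _ => rfl
  | _, .con i t a => congrArg (con i t) <| funext fun k =>
      (congrArg (bind · (a k)) (funext₂ (liftSubst_var _))).trans (bind_var (a k))

theorem liftSubst_bind {V W X : What S → Type} (σ : ∀ s, V s → Tm S Sg W s)
    (τ : ∀ s, W s → Tm S Sg X s) :
    ∀ (l : List (What S)) (s) (x : extList V l s),
      liftSubst (fun s v => (σ s v).bind τ) l s x = (liftSubst σ l s x).bind (liftSubst τ l)
  | [], _, _ => rfl
  | _ :: l, s, Sum.inl v => by
      change rename _ (liftSubst _ l s v) = bind _ (rename _ (liftSubst σ l s v))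
      rw [liftSubst_bind σ τ l]
      exact (rename_bind _ _ _).trans
        (bind_rename (fun _ => ↾Sum.inl) (liftSubst τ (_ :: l)) _).symm
  | _ :: _, _, Sum.inr _ => rfl

theorem bind_bind {V W X : What S → Type} (σ : ∀ s, V s → Tm S Sg W s)
    (τ : ∀ s, W s → Tm S Sg X s) :
    ∀ {s} (x : Tm S Sg V s), (x.bind σ).bind τ = x.bind fun s v => (σ s v).bind τ
  | _, .var _ => rfl
  | _, .con i t a => congrArg (con i t) <| funext fun k =>
      (bind_bind _ _ (a k)).trans
        (congrArg (bind · (a k)) (funext₂ fun s x => (liftSubst_bind σ τ _ s x).symm))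

end Tm

section Smallness

variable {J I : Type} {S : J → ℕ} {Sg : I → ClassicArity S}

inductive TmCode (S : J → ℕ) (Sg : I → ClassicArity S) (V : What S → Type) : Type
  | var (l : List (What S)) (s : What S) (x : extList V l s)
  | con (i : I) (t : Fin (Sg i).deg → What S) (a : Fin (Sg i).args.length → TmCode S Sg V)

def extListAppendEquiv {T : Type} {V : T → Type} (l : List T) :
    ∀ (l' : List T) (s : T), extList (extList V l) l' s ≃ extList V (l' ++ l) s
  | [], _ => Equiv.refl _
  | _ :: l', s => Equiv.sumCongr (extListAppendEquiv l l' s) (Equiv.refl _)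

def TmCode.rebase {V : What S → Type} (l : List (What S)) :
    TmCode S Sg (extList V l) → TmCode S Sg V
  | .var l' s x => .var (l' ++ l) s (extListAppendEquiv l l' s x)
  | .con i t a => .con i t fun k => (a k).rebase l

theorem TmCode.rebase_injective {V : What S → Type} (l : List (What S)) :
    Function.Injective (TmCode.rebase (S := S) (Sg := Sg) (V := V) l) := by
  intro c c' h
  induction c generalizing c' with
  | var l' s x =>
    cases c' with
    | var l'' s' y =>
      simp only [rebase, var.injEq, List.append_cancel_right_eq] at h
      obtain ⟨rfl, rfl, h⟩ := h
      rw [(extListAppendEquiv l l' s).injective (eq_of_heq h)]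
    | con => simp [rebase] at h
  | con i t a ih =>
    cases c' with
    | var => simp [rebase] at h
    | con i' t' a' =>
      simp only [rebase, con.injEq] at h
      obtain ⟨rfl, ht, ha⟩ := h
      obtain rfl := eq_of_heq ht
      rw [funext fun k => ih k (congrFun (eq_of_heq ha) k)]

def Tm.encode {V : What S → Type} : ∀ {s}, Tm S Sg V s → TmCode S Sg V
  | s, .var v => .var [] s v
  | _, .con i t a => .con i t fun k => (a k).encode.rebase (argCtx (Sg i) (initSRep S) t k)

theorem Tm.encode_injective {V : What S → Type} {s s' : What S} (x : Tm S Sg V s)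
    (y : Tm S Sg V s') (h : x.encode = y.encode) : HEq x y := by
  induction x generalizing s' with
  | var v =>
    cases y with
    | var w =>
      cases h
      rfl
    | con => simp [encode] at h
  | con i t a ih =>
    cases y with
    | var => simp [encode] at h
    | con i' t' a' =>
      simp only [encode, TmCode.con.injEq] at h
      obtain ⟨rfl, ht, ha⟩ := h
      obtain rfl := eq_of_heq ht
      rw [funext fun k => eq_of_heq <| ih k (a' k) <|
        TmCode.rebase_injective _ (congrFun (eq_of_heq ha) k)]

instance {V : What S → Type} {s : What S} : Small.{0} (Tm S Sg V s) :=
  small_of_injective fun x y h => eq_of_heq (Tm.encode_injective x y h)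

end Smallness

section TermMonad

variable {J I : Type} {S : J → ℕ} {Sg : I → ClassicArity S}

noncomputable def Tm.shrink {V : What S → Type} {s : What S} (x : Tm S Sg V s) :
    Shrink (Tm S Sg V s) :=
  equivShrink _ x

noncomputable def Tm.unshrink {V : What S → Type} {s : What S} (x : Shrink (Tm S Sg V s)) :
    Tm S Sg V s :=
  (equivShrink _).symm x

@[simp] theorem Tm.unshrink_shrink {V : What S → Type} {s : What S} (x : Tm S Sg V s) :
    Tm.unshrink x.shrink = x :=
  (equivShrink _).symm_apply_apply x

@[simp] theorem Tm.shrink_unshrink {V : What S → Type} {s : What S}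
    (x : Shrink (Tm S Sg V s)) : (Tm.unshrink x).shrink = x :=
  (equivShrink _).apply_symm_apply x

variable (S Sg) in
noncomputable def termMonad : CategoryTheory.Monad (What S → Type) where
  obj V s := Shrink (Tm S Sg V s)
  map f _ := ↾fun x => ((Tm.unshrink x).rename f).shrink
  map_id V := famHom_ext fun _ x => by simp [Tm.rename_id]
  map_comp f g := famHom_ext fun _ x => by simp [Tm.rename_comp]
  η.app V _ := ↾fun v => (Tm.var v).shrink
  η.naturality _ _ f := famHom_ext fun _ v => by simp [Tm.rename]
  μ.app V _ := ↾fun x => ((Tm.unshrink x).bind fun _ y => Tm.unshrink y).shrink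
  μ.naturality _ _ f := famHom_ext fun _ x => by simp [Tm.bind_rename, Tm.rename_bind]
  assoc _ := famHom_ext fun _ x => by simp [Tm.bind_rename, Tm.bind_bind]
  left_unit _ := famHom_ext fun _ x => by simp [Tm.bind]
  right_unit _ := famHom_ext fun _ x => by simp [Tm.bind_rename, Tm.bind_var]

end TermMonad

section TermRepresentation

variable {J I : Type} {S : J → ℕ} {Sg : I → ClassicArity S}

theorem Tm.unshrink_gammaList {V : What S → Type} :
    ∀ (l : List (What S)) (s : What S) (x : extList ((termMonad S Sg).obj V) l s),
      Tm.unshrink (gammaList (termMonad S Sg) l V s x) =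
        Tm.liftSubst (fun _ y => Tm.unshrink y) l s x
  | [], _, _ => rfl
  | u :: l, s, Sum.inl v => by
      change Tm.unshrink (Tm.rename _ (Tm.unshrink (gammaList (termMonad S Sg) l V s v))).shrink = _
      rw [Tm.unshrink_shrink, Tm.unshrink_gammaList l]
      rfl
  | _ :: _, _, Sum.inr _ => Tm.unshrink_shrink _

variable (S Sg) in
noncomputable def termSigRepOn : SigRepOn S Sg (initSRep S) where
  P := termMonad S Sg
  rep i t V a := (Tm.con i t fun k => Tm.unshrink (a k)).shrink
  rep_natural i t V W f a := by
    change _ = (Tm.rename f (Tm.unshrink (Tm.con i t _).shrink)).shrink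
    erw [Tm.unshrink_shrink]
    refine congrArg (fun a => (Tm.con i t a).shrink) (funext fun k => ?_)
    erw [Tm.unshrink_shrink]
    rfl
  rep_mod i t V a := by
    change _ = (Tm.bind _ (Tm.unshrink (Tm.con i t _).shrink)).shrink
    erw [Tm.unshrink_shrink]
    refine congrArg (fun a => (Tm.con i t a).shrink) (funext fun k => ?_)
    erw [Tm.unshrink_shrink, Tm.unshrink_shrink, Tm.bind_rename]
    exact congrArg (Tm.bind · _) (funext₂ (Tm.unshrink_gammaList _))

end TermRepresentation

section InitialSorts

variable {J : Type} {S : J → ℕ}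

def What.fold (A : SRep S) : What S → A.carrier
  | .mk j a => A.op j fun i => (a i).fold A

def foldHom (A : SRep S) : SRepHom (initSRep S) A :=
  ⟨What.fold A, fun _ _ => rfl⟩

theorem SRepHom.ext {A B : SRep S} {h h' : SRepHom A B} (e : h.toFun = h'.toFun) : h = h' := by
  cases h; cases h'; cases e; rfl

theorem foldHom_unique {A : SRep S} (h : SRepHom (initSRep S) A) : h = foldHom A :=
  SRepHom.ext <| funext fun x => by
    induction x with
    | mk j a ih => exact (h.compat j a).trans (congrArg (A.op j) (funext ih))

theorem initSRep_initial (A : SRep S) : ∃! _ : SRepHom (initSRep S) A, True :=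
  ⟨foldHom A, trivial, fun h _ => foldHom_unique h⟩

end InitialSorts

namespace CategoryTheory.Monad

variable {T : Type} (P : CategoryTheory.Monad (T → Type))

theorem map_id_apply (X : T → Type) (s : T) (p : P.obj X s) : P.map (𝟙 X) s p = p :=
  ConcreteCategory.congr_hom (congrFun (P.map_id X) s) p

theorem map_comp_apply {X Y Z : T → Type} (f : X ⟶ Y) (g : Y ⟶ Z) (s : T) (p : P.obj X s) :
    P.map (f ≫ g) s p = P.map g s (P.map f s p) :=
  ConcreteCategory.congr_hom (congrFun (P.map_comp f g) s) p

theorem η_naturality_apply {X Y : T → Type} (f : X ⟶ Y) (s : T) (p : X s) :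
    P.η.app Y s (f s p) = P.map f s (P.η.app X s p) :=
  ConcreteCategory.congr_hom (congrFun (P.η.naturality f) s) p

theorem μ_naturality_apply {X Y : T → Type} (f : X ⟶ Y) (s : T) (p : P.obj (P.obj X) s) :
    P.μ.app Y s (P.map (P.map f) s p) = P.map f s (P.μ.app X s p) :=
  ConcreteCategory.congr_hom (congrFun (P.μ.naturality f) s) p

theorem left_unit_apply (X : T → Type) (s : T) (p : P.obj X s) :
    P.μ.app X s (P.η.app (P.obj X) s p) = p :=
  ConcreteCategory.congr_hom (congrFun (P.left_unit X) s) p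

end CategoryTheory.Monad

theorem famHom_apply_cast {T ι : Type} {F G : ι → T → Type} (φ : ∀ i, F i ⟶ G i)
    {i i' : ι} (hi : i = i') {s s' : T} (hs : s = s') (h : F i s = F i' s') (x : F i s) :
    φ i' s' (cast h x) = cast (by rw [hi, hs]) (φ i s x) := by
  subst hi hs; rfl

section Translation

variable {J I : Type} {S : J → ℕ} {Sg : I → ClassicArity S} (R : SigRep S Sg)
  (g : SRepHom (initSRep S) R.sorts)

noncomputable def translateArg (i : I) (t : Fin (Sg i).deg → What S) {V : What S → Type}
    (k : Fin (Sg i).args.length)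
    (y : R.str.P.obj (retypeObj g.toFun (extList V (argCtx (Sg i) (initSRep S) t k)))
      (g.toFun (argSort (Sg i) (initSRep S) t k))) :
    R.str.P.obj (extList (retypeObj g.toFun V) (argCtx (Sg i) R.sorts (fun m => g.toFun (t m)) k))
      (argSort (Sg i) R.sorts (fun m => g.toFun (t m)) k) :=
  cast (by erw [argCtx_comm g, argSort_comm g])
    (R.str.P.map (dList g.toFun V (argCtx (Sg i) (initSRep S) t k)) _ y)

noncomputable def Tm.translate {V : What S → Type} :
    ∀ {s}, Tm S Sg V s → R.str.P.obj (retypeObj g.toFun V) (g.toFun s)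
  | _, .var v => R.str.P.η.app _ _ ⟨⟨_, rfl⟩, v⟩
  | _, .con i t a =>
      cast (by erw [outSort_comm g])
        (R.str.rep i (fun m => g.toFun (t m)) _ fun k => translateArg R g i t k (a k).translate)

theorem Tm.translate_con (i : I) (t : Fin (Sg i).deg → What S) {V : What S → Type}
    (a : ∀ k : Fin (Sg i).args.length,
      Tm S Sg (extList V (argCtx (Sg i) (initSRep S) t k)) (argSort (Sg i) (initSRep S) t k)) :
    (Tm.con i t a).translate R g =
      cast (by erw [outSort_comm g])
        (R.str.rep i (fun m => g.toFun (t m)) (retypeObj g.toFun V)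
          fun k => translateArg R g i t k ((a k).translate R g)) :=
  rfl

theorem translateArg_natural (i : I) (t : Fin (Sg i).deg → What S) {V W : What S → Type}
    (f : V ⟶ W) (k : Fin (Sg i).args.length)
    (y : R.str.P.obj (retypeObj g.toFun (extList V (argCtx (Sg i) (initSRep S) t k)))
      (g.toFun (argSort (Sg i) (initSRep S) t k))) :
    translateArg R g i t k
        (R.str.P.map (retypeMap g.toFun (extListMap f (argCtx (Sg i) (initSRep S) t k))) _ y) =
      R.str.P.map (extListMap (retypeMap g.toFun f) _) _ (translateArg R g i t k y) := by
  unfold translateArg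
  erw [← R.str.P.map_comp_apply, dList_natural g.toFun f, R.str.P.map_comp_apply]
  exact (famHom_apply_cast (fun l => R.str.P.map (extListMap (retypeMap g.toFun f) l))
    (argCtx_comm g (Sg i) t k).symm (argSort_comm g (Sg i) t k).symm _ _).symm

theorem Tm.translate_rename {V W : What S → Type} (f : V ⟶ W) {s : What S} (x : Tm S Sg V s) :
    (x.rename f).translate R g = R.str.P.map (retypeMap g.toFun f) _ (x.translate R g) := by
  induction x generalizing W with
  | var v => exact R.str.P.η_naturality_apply (retypeMap g.toFun f) _ ⟨⟨_, rfl⟩, v⟩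
  | con i t a ih =>
    change (Tm.con i t fun k => (a k).rename _).translate R g = _
    rw [Tm.translate_con, Tm.translate_con, famHom_apply_cast (i := ())
      (fun _ => R.str.P.map (retypeMap g.toFun f)) rfl (outSort_comm g (Sg i) t),
      ← R.str.rep_natural]
    simp only [ih]
    exact congrArg (fun b => cast _ (R.str.rep i _ _ b))
      (funext fun k => translateArg_natural R g i t f k _)

noncomputable def translateSubst {V W : What S → Type} (σ : ∀ s, V s → Tm S Sg W s) :
    retypeObj g.toFun V ⟶ R.str.P.obj (retypeObj g.toFun W) :=
  fun _ => ↾fun ⟨⟨s, hs⟩, v⟩ => hs ▸ (σ s v).translate R g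

theorem translateSubst_liftSubst {V W : What S → Type} (σ : ∀ s, V s → Tm S Sg W s) :
    ∀ l : List (What S),
      translateSubst R g (Tm.liftSubst σ l) ≫ R.str.P.map (dList g.toFun W l) =
        dList g.toFun V l ≫ extListMap (translateSubst R g σ) (l.map g.toFun) ≫
          gammaList R.str.P (l.map g.toFun) (retypeObj g.toFun W)
  | [] => famHom_ext fun _ _ => R.str.P.map_id_apply _ _ _
  | u :: l => famHom_ext fun _ p => by
      obtain ⟨⟨w, rfl⟩, v | h⟩ := p
      · have ih := ConcreteCategory.congr_hom
          (congrFun (translateSubst_liftSubst σ l) (g.toFun w)) ⟨⟨w, rfl⟩, v⟩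
        -- `retypeMap _ Sum.inl ≫ dList _ _ (u :: l)` is definitionally `dList _ _ l ≫ Sum.inl`
        exact (congrArg (R.str.P.map _ _) (Tm.translate_rename R g _ _)).trans <|
          (R.str.P.map_comp_apply _ _ _ _).symm.trans <|
            (R.str.P.map_comp_apply (dList g.toFun W l) (fun _ => ↾Sum.inl) _ _).trans <|
              congrArg (R.str.P.map _ _) ih
      · exact (R.str.P.η_naturality_apply _ _ _).symm

theorem translateArg_bind (i : I) (t : Fin (Sg i).deg → What S) {V W : What S → Type}
    (σ : ∀ s, V s → Tm S Sg W s) (k : Fin (Sg i).args.length)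
    (y : R.str.P.obj (retypeObj g.toFun (extList V (argCtx (Sg i) (initSRep S) t k)))
      (g.toFun (argSort (Sg i) (initSRep S) t k))) :
    translateArg R g i t k (R.str.P.μ.app _ _
        (R.str.P.map (translateSubst R g (Tm.liftSubst σ (argCtx (Sg i) (initSRep S) t k))) _ y)) =
      R.str.P.μ.app _ _ (R.str.P.map (gammaList R.str.P _ (retypeObj g.toFun W)) _
        (R.str.P.map (extListMap (translateSubst R g σ) _) _ (translateArg R g i t k y))) := by
  unfold translateArg
  erw [← R.str.P.μ_naturality_apply, ← R.str.P.map_comp_apply, ← R.str.P.map_comp_apply,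
    translateSubst_liftSubst, R.str.P.map_comp_apply, R.str.P.map_comp_apply,
    R.str.P.map_comp_apply]
  exact (famHom_apply_cast (fun l => R.str.P.map (extListMap (translateSubst R g σ) l) ≫
      R.str.P.map (gammaList R.str.P l (retypeObj g.toFun W)) ≫ R.str.P.μ.app _)
    (argCtx_comm g (Sg i) t k).symm (argSort_comm g (Sg i) t k).symm _ _).symm

theorem Tm.translate_bind {V W : What S → Type} (σ : ∀ s, V s → Tm S Sg W s) {s : What S}
    (x : Tm S Sg V s) :
    (x.bind σ).translate R g =
      R.str.P.μ.app _ _ (R.str.P.map (translateSubst R g σ) _ (x.translate R g)) := by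
  induction x generalizing W with
  | var v =>
    change (σ _ v).translate R g = _
    erw [← R.str.P.η_naturality_apply, R.str.P.left_unit_apply]
    rfl
  | con i t a ih =>
    change (Tm.con i t fun k => (a k).bind _).translate R g = _
    rw [Tm.translate_con, Tm.translate_con, famHom_apply_cast (i := ())
      (fun _ => R.str.P.map (translateSubst R g σ)) rfl (outSort_comm g (Sg i) t),
      famHom_apply_cast (i := ()) (fun _ => R.str.P.μ.app _) rfl (outSort_comm g (Sg i) t),
      ← R.str.rep_natural, ← R.str.rep_mod]
    simp only [ih]
    exact congrArg (fun b => cast _ (R.str.rep i _ _ b))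
      (funext fun k => translateArg_bind R g i t σ k _)

end Translation

section Initiality

variable {J I : Type} {S : J → ℕ} {Sg : I → ClassicArity S} (R : SigRep S Sg)

noncomputable def translateHom (g : SRepHom (initSRep S) R.sorts) :
    SigRepHom ⟨initSRep S, termSigRepOn S Sg⟩ R where
  g := g
  f _ := translateSubst R g fun _ y => Tm.unshrink y
  f_natural k := famHom_ext fun _ p => by
    obtain ⟨⟨s, rfl⟩, x⟩ := p
    change (Tm.unshrink (Tm.rename k (Tm.unshrink x)).shrink).translate R g = _
    erw [Tm.unshrink_shrink, Tm.translate_rename]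
    rfl
  f_unit _ := famHom_ext fun _ p => by
    obtain ⟨⟨s, rfl⟩, v⟩ := p
    exact congrArg (Tm.translate R g) (Tm.unshrink_shrink (Tm.var v))
  f_mul _ := famHom_ext fun _ p => by
    obtain ⟨⟨s, rfl⟩, x⟩ := p
    change (Tm.unshrink (Tm.bind _ (Tm.unshrink x)).shrink).translate R g = _
    erw [Tm.unshrink_shrink]
    exact Tm.translate_bind R g _ _
  rep_compat i t V a := congrArg (Tm.translate R g) (Tm.unshrink_shrink (Tm.con i t _))

theorem SigRepHom.f_shrink_eq_translate (h : SigRepHom ⟨initSRep S, termSigRepOn S Sg⟩ R)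
    {V : What S → Type} {s : What S} (y : Tm S Sg V s) :
    h.f V (h.g.toFun s) ⟨⟨s, rfl⟩, y.shrink⟩ = y.translate R h.g := by
  induction y with
  | var v =>
    exact ConcreteCategory.congr_hom (congrFun (h.f_unit _) (h.g.toFun _)) ⟨⟨_, rfl⟩, v⟩
  | con i t a ih =>
    have hrep : (termSigRepOn S Sg).rep i t _ (fun k => (a k).shrink) = (Tm.con i t a).shrink :=
      congrArg Tm.shrink (congrArg (Tm.con i t) (funext fun k => Tm.unshrink_shrink (a k)))
    erw [← hrep, h.rep_compat, Tm.translate_con]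
    exact congrArg (fun b => cast _ (R.str.rep i _ _ b))
      (funext fun k => congrArg (translateArg R h.g i t k) (ih k))

theorem SigRepHom.f_eq_translateHom (h : SigRepHom ⟨initSRep S, termSigRepOn S Sg⟩ R) :
    h.f = (translateHom R h.g).f :=
  funext fun _ => famHom_ext fun _ ⟨⟨s, hs⟩, x⟩ => by
    subst hs
    have h' := h.f_shrink_eq_translate R (Tm.unshrink x)
    erw [Tm.shrink_unshrink] at h'
    exact h'

theorem SigRepHom.eq_translateHom (h : SigRepHom ⟨initSRep S, termSigRepOn S Sg⟩ R) :
    h = translateHom R h.g := by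
  obtain ⟨g, f, f_natural, f_unit, f_mul, rep_compat⟩ := h
  obtain rfl : f = (translateHom R g).f :=
    SigRepHom.f_eq_translateHom R ⟨g, f, f_natural, f_unit, f_mul, rep_compat⟩
  rfl

end Initiality

/-- **Initiality for typed signatures.** For every typed signature `(S, Sg)`, the
category of representations of `(S, Sg)` has an initial object: a representation over
the initial representation `Ŝ` of `S` admitting a unique morphism of representations
into every representation of `(S, Sg)`, and whose underlying monad is (in bijection
with, commuting with variables-as-terms and the constructors) the term monad freely
generated by the signature. -/
theorem sigRep_initial {J I : Type} (S : J → ℕ) (Sg : I → ClassicArity S) :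
    ∃ R₀ : SigRepOn S Sg (initSRep S),
      (∀ A : SRep S, ∃! _ : SRepHom (initSRep S) A, True) ∧
      (∀ R : SigRep S Sg, ∃! _ : SigRepHom ⟨initSRep S, R₀⟩ R, True) ∧
      ∃ e : ∀ (V : What S → Type) (s : What S), R₀.P.obj V s ≃ Tm S Sg V s,
        (∀ (V : What S → Type) (s : What S) (v : V s),
          e V s (R₀.P.η.app V s v) = .var v) ∧
        (∀ (i : I) (t : Fin (Sg i).deg → What S) (V : What S → Type)
            (a : ∀ k : Fin (Sg i).args.length,
              R₀.P.obj (extList V (argCtx (Sg i) (initSRep S) t k))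
                (argSort (Sg i) (initSRep S) t k)),
          e V (outSort (Sg i) (initSRep S) t) (R₀.rep i t V a) =
            .con i t (fun k => e _ _ (a k))) :=
  ⟨termSigRepOn S Sg, initSRep_initial,
    fun R => ⟨translateHom R (foldHom R.sorts), trivial, fun h _ =>
      h.eq_translateHom.trans (congrArg (translateHom R) (foldHom_unique h.g))⟩,
    fun V s => (equivShrink (Tm S Sg V s)).symm, fun _ _ _ => Tm.unshrink_shrink _,
    fun i t _ _ => Tm.unshrink_shrink (Tm.con i t _)⟩
end

section
/- Define a PCF representation to be a tuple consisting of: a type Sorts with a binary operation ⇒ and constants Bool and Nat; a monad P on the category [Sorts, Type] of Sorts-indexed families of types; and P-module morphisms app_{u,v} : [P]_{u⇒v} × [P]_u → [P]_v, abs_{u,v} : [P^{*u}]_v → [P]_{u⇒v}, rec_t : [P]_{t⇒t} → [P]_t for all u, v, t ∈ Sorts, together with morphisms from the terminal module: tt, ff : 1 → [P]_{Bool}, a numeral n : 1 → [P]_{Nat} for each natural number n, Succ, Pred : 1 → [P]_{Nat⇒Nat}, Zero : 1 → [P]_{Nat⇒Bool}, CondN : 1 → [P]_{Bool⇒Nat⇒Nat⇒Nat},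 CondB : 1 → [P]_{Bool⇒Bool⇒Bool⇒Bool}, and bottom_t : 1 → [P]_t for each t. A morphism of PCF representations from (Sorts, P, …) to (Sorts', R, …) is a map g : Sorts → Sorts' preserving ⇒, Bool and Nat, together with a colax monad morphism f : P → R over the retyping functor ḡ, such that f commutes with each of the listed module morphisms in the evident sense (e.g., translating app of P and then applying f equals applying f to the arguments and then app of R at the translated sorts, modulo the canonical identifications). Then the category of PCF representations has an initial object, whose sorts are T_PCF ::= Nat | Bool | T_PCF ⇒ T_PCF and whose monad is the intrinsically typed PCF term monad with its canonical representation structure given by the syntactic constructors. -/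
open CategoryTheory

/-- A representation of the typed signature of PCF over a fixed sort structure
`(Sorts, ⇒, Bool, Nat)`: a monad `P` on `[Sorts, Type]` together with module
morphisms representing the arities of PCF. -/
structure PCFRepOn (Sorts : Type) (arr : Sorts → Sorts → Sorts)
    (bool : Sorts) (nat : Sorts) where
  P : CategoryTheory.Monad (Sorts → Type)
  /-- application, `[P]_{u⇒v} × [P]_u → [P]_v` -/
  app : ∀ (u v : Sorts) (V : Sorts → Type), P.obj V (arr u v) → P.obj V u → P.obj V v
  app_natural : ∀ (u v : Sorts) {V W : Sorts → Type} (f : V ⟶ W)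
      (a : P.obj V (arr u v)) (b : P.obj V u),
      app u v W (P.map f (arr u v) a) (P.map f u b) = P.map f v (app u v V a b)
  app_mod : ∀ (u v : Sorts) (V : Sorts → Type)
      (a : P.obj (P.obj V) (arr u v)) (b : P.obj (P.obj V) u),
      app u v V (P.μ.app V (arr u v) a) (P.μ.app V u b) =
        P.μ.app V v (app u v (P.obj V) a b)
  /-- abstraction, `[P^{*u}]_v → [P]_{u⇒v}` -/
  abs : ∀ (u v : Sorts) (V : Sorts → Type), P.obj (extC V u) v → P.obj V (arr u v)
  abs_natural : ∀ (u v : Sorts) {V W : Sorts → Type} (f : V ⟶ W)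
      (m : P.obj (extC V u) v),
      abs u v W (P.map (extCMap f u) v m) = P.map f (arr u v) (abs u v V m)
  abs_mod : ∀ (u v : Sorts) (V : Sorts → Type) (m : P.obj (extC (P.obj V) u) v),
      abs u v V (P.μ.app (extC V u) v (P.map (gammaC P u V) v m)) =
        P.μ.app V (arr u v) (abs u v (P.obj V) m)
  /-- fixed-point operator, `[P]_{t⇒t} → [P]_t` -/
  fixp : ∀ (t : Sorts) (V : Sorts → Type), P.obj V (arr t t) → P.obj V t
  fixp_natural : ∀ (t : Sorts) {V W : Sorts → Type} (f : V ⟶ W)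
      (m : P.obj V (arr t t)),
      fixp t W (P.map f (arr t t) m) = P.map f t (fixp t V m)
  fixp_mod : ∀ (t : Sorts) (V : Sorts → Type) (m : P.obj (P.obj V) (arr t t)),
      fixp t V (P.μ.app V (arr t t) m) = P.μ.app V t (fixp t (P.obj V) m)
  /-- the constants, as morphisms from the terminal module -/
  tt : ∀ V : Sorts → Type, P.obj V bool
  tt_natural : ∀ {V W : Sorts → Type} (f : V ⟶ W), P.map f bool (tt V) = tt W
  tt_mod : ∀ V : Sorts → Type, P.μ.app V bool (tt (P.obj V)) = tt V
  ff : ∀ V : Sorts → Type, P.obj V bool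
  ff_natural : ∀ {V W : Sorts → Type} (f : V ⟶ W), P.map f bool (ff V) = ff W
  ff_mod : ∀ V : Sorts → Type, P.μ.app V bool (ff (P.obj V)) = ff V
  num : ∀ (_ : ℕ) (V : Sorts → Type), P.obj V nat
  num_natural : ∀ (n : ℕ) {V W : Sorts → Type} (f : V ⟶ W),
      P.map f nat (num n V) = num n W
  num_mod : ∀ (n : ℕ) (V : Sorts → Type), P.μ.app V nat (num n (P.obj V)) = num n V
  succ : ∀ V : Sorts → Type, P.obj V (arr nat nat)
  succ_natural : ∀ {V W : Sorts → Type} (f : V ⟶ W),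
      P.map f (arr nat nat) (succ V) = succ W
  succ_mod : ∀ V : Sorts → Type, P.μ.app V (arr nat nat) (succ (P.obj V)) = succ V
  pred : ∀ V : Sorts → Type, P.obj V (arr nat nat)
  pred_natural : ∀ {V W : Sorts → Type} (f : V ⟶ W),
      P.map f (arr nat nat) (pred V) = pred W
  pred_mod : ∀ V : Sorts → Type, P.μ.app V (arr nat nat) (pred (P.obj V)) = pred V
  zero : ∀ V : Sorts → Type, P.obj V (arr nat bool)
  zero_natural : ∀ {V W : Sorts → Type} (f : V ⟶ W),
      P.map f (arr nat bool) (zero V) = zero W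
  zero_mod : ∀ V : Sorts → Type, P.μ.app V (arr nat bool) (zero (P.obj V)) = zero V
  condN : ∀ V : Sorts → Type, P.obj V (arr bool (arr nat (arr nat nat)))
  condN_natural : ∀ {V W : Sorts → Type} (f : V ⟶ W),
      P.map f (arr bool (arr nat (arr nat nat))) (condN V) = condN W
  condN_mod : ∀ V : Sorts → Type,
      P.μ.app V (arr bool (arr nat (arr nat nat))) (condN (P.obj V)) = condN V
  condB : ∀ V : Sorts → Type, P.obj V (arr bool (arr bool (arr bool bool)))
  condB_natural : ∀ {V W : Sorts → Type} (f : V ⟶ W),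
      P.map f (arr bool (arr bool (arr bool bool))) (condB V) = condB W
  condB_mod : ∀ V : Sorts → Type,
      P.μ.app V (arr bool (arr bool (arr bool bool))) (condB (P.obj V)) = condB V
  bot : ∀ (t : Sorts) (V : Sorts → Type), P.obj V t
  bot_natural : ∀ (t : Sorts) {V W : Sorts → Type} (f : V ⟶ W),
      P.map f t (bot t V) = bot t W
  bot_mod : ∀ (t : Sorts) (V : Sorts → Type), P.μ.app V t (bot t (P.obj V)) = bot t V

/-- A representation of the typed signature of PCF. -/
structure PCFRep where
  Sorts : Type
  arr : Sorts → Sorts → Sorts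
  bool : Sorts
  nat : Sorts
  str : PCFRepOn Sorts arr bool nat

/-- A morphism of PCF-representations: a map of sorts preserving `⇒`, `Bool`, `Nat`,
together with a colax monad morphism over the associated retyping functor, commuting
with all the PCF operations (modulo the canonical identifications). -/
structure PCFRepHom (X Y : PCFRep) where
  g : X.Sorts → Y.Sorts
  g_arr : ∀ u v, g (X.arr u v) = Y.arr (g u) (g v)
  g_bool : g X.bool = Y.bool
  g_nat : g X.nat = Y.nat
  f : ∀ V : X.Sorts → Type,
      retypeObj g (X.str.P.obj V) ⟶ Y.str.P.obj (retypeObj g V)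
  f_natural : ∀ {V W : X.Sorts → Type} (k : V ⟶ W),
      retypeMap g (X.str.P.map k) ≫ f W = f V ≫ Y.str.P.map (retypeMap g k)
  f_unit : ∀ V : X.Sorts → Type,
      retypeMap g (X.str.P.η.app V) ≫ f V = Y.str.P.η.app (retypeObj g V)
  f_mul : ∀ V : X.Sorts → Type,
      retypeMap g (X.str.P.μ.app V) ≫ f V =
        f (X.str.P.obj V) ≫ Y.str.P.map (f V) ≫ Y.str.P.μ.app (retypeObj g V)
  app_compat : ∀ (u v : X.Sorts) (V : X.Sorts → Type)
      (a : X.str.P.obj V (X.arr u v)) (b : X.str.P.obj V u),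
      f V (g v) ⟨⟨v, rfl⟩, X.str.app u v V a b⟩ =
        Y.str.app (g u) (g v) (retypeObj g V)
          (cast (by rw [g_arr]) (f V (g (X.arr u v)) ⟨⟨X.arr u v, rfl⟩, a⟩))
          (f V (g u) ⟨⟨u, rfl⟩, b⟩)
  abs_compat : ∀ (u v : X.Sorts) (V : X.Sorts → Type)
      (m : X.str.P.obj (extC V u) v),
      f V (g (X.arr u v)) ⟨⟨X.arr u v, rfl⟩, X.str.abs u v V m⟩ =
        cast (by rw [g_arr])
          (Y.str.abs (g u) (g v) (retypeObj g V)
            (Y.str.P.map (dC g V u) (g v) (f (extC V u) (g v) ⟨⟨v, rfl⟩, m⟩)))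
  fixp_compat : ∀ (t : X.Sorts) (V : X.Sorts → Type)
      (m : X.str.P.obj V (X.arr t t)),
      f V (g t) ⟨⟨t, rfl⟩, X.str.fixp t V m⟩ =
        Y.str.fixp (g t) (retypeObj g V)
          (cast (by rw [g_arr]) (f V (g (X.arr t t)) ⟨⟨X.arr t t, rfl⟩, m⟩))
  tt_compat : ∀ V : X.Sorts → Type,
      f V (g X.bool) ⟨⟨X.bool, rfl⟩, X.str.tt V⟩ =
        cast (by rw [g_bool]) (Y.str.tt (retypeObj g V))
  ff_compat : ∀ V : X.Sorts → Type,
      f V (g X.bool) ⟨⟨X.bool, rfl⟩, X.str.ff V⟩ =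
        cast (by rw [g_bool]) (Y.str.ff (retypeObj g V))
  num_compat : ∀ (n : ℕ) (V : X.Sorts → Type),
      f V (g X.nat) ⟨⟨X.nat, rfl⟩, X.str.num n V⟩ =
        cast (by rw [g_nat]) (Y.str.num n (retypeObj g V))
  succ_compat : ∀ V : X.Sorts → Type,
      f V (g (X.arr X.nat X.nat)) ⟨⟨X.arr X.nat X.nat, rfl⟩, X.str.succ V⟩ =
        cast (by simp only [g_arr, g_nat]) (Y.str.succ (retypeObj g V))
  pred_compat : ∀ V : X.Sorts → Type,
      f V (g (X.arr X.nat X.nat)) ⟨⟨X.arr X.nat X.nat, rfl⟩, X.str.pred V⟩ =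
        cast (by simp only [g_arr, g_nat]) (Y.str.pred (retypeObj g V))
  zero_compat : ∀ V : X.Sorts → Type,
      f V (g (X.arr X.nat X.bool)) ⟨⟨X.arr X.nat X.bool, rfl⟩, X.str.zero V⟩ =
        cast (by simp only [g_arr, g_nat, g_bool]) (Y.str.zero (retypeObj g V))
  condN_compat : ∀ V : X.Sorts → Type,
      f V (g (X.arr X.bool (X.arr X.nat (X.arr X.nat X.nat))))
          ⟨⟨X.arr X.bool (X.arr X.nat (X.arr X.nat X.nat)), rfl⟩, X.str.condN V⟩ =
        cast (by simp only [g_arr, g_nat, g_bool]) (Y.str.condN (retypeObj g V))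
  condB_compat : ∀ V : X.Sorts → Type,
      f V (g (X.arr X.bool (X.arr X.bool (X.arr X.bool X.bool))))
          ⟨⟨X.arr X.bool (X.arr X.bool (X.arr X.bool X.bool)), rfl⟩, X.str.condB V⟩ =
        cast (by simp only [g_arr, g_bool]) (Y.str.condB (retypeObj g V))
  bot_compat : ∀ (t : X.Sorts) (V : X.Sorts → Type),
      f V (g t) ⟨⟨t, rfl⟩, X.str.bot t V⟩ = Y.str.bot (g t) (retypeObj g V)

/-- The types of PCF: `T_PCF ::= Nat | Bool | T_PCF ⇒ T_PCF`. -/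
inductive PcfTy : Type
  | nat : PcfTy
  | bool : PcfTy
  | arr : PcfTy → PcfTy → PcfTy

/-- Intrinsically typed PCF syntax. -/
inductive PCFTm : (PcfTy → Type) → PcfTy → Type 1
  | var {V : PcfTy → Type} {t : PcfTy} : V t → PCFTm V t
  | bot {V : PcfTy → Type} (t : PcfTy) : PCFTm V t
  | app {V : PcfTy → Type} {u v : PcfTy} :
      PCFTm V (.arr u v) → PCFTm V u → PCFTm V v
  | lam {V : PcfTy → Type} {u v : PcfTy} : PCFTm (extC V u) v → PCFTm V (.arr u v)
  | fixp {V : PcfTy → Type} {t : PcfTy} : PCFTm V (.arr t t) → PCFTm V t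
  | tt {V : PcfTy → Type} : PCFTm V .bool
  | ff {V : PcfTy → Type} : PCFTm V .bool
  | num {V : PcfTy → Type} : ℕ → PCFTm V .nat
  | succ {V : PcfTy → Type} : PCFTm V (.arr .nat .nat)
  | pred {V : PcfTy → Type} : PCFTm V (.arr .nat .nat)
  | zero {V : PcfTy → Type} : PCFTm V (.arr .nat .bool)
  | condN {V : PcfTy → Type} : PCFTm V (.arr .bool (.arr .nat (.arr .nat .nat)))
  | condB {V : PcfTy → Type} : PCFTm V (.arr .bool (.arr .bool (.arr .bool .bool)))

/-!
The syntax `PCFTm` lives in `Type 1`, since its binders change the indexing family of variables.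
A monad on `[PcfTy, Type]` is therefore carried by `Tm V [] t`, where `Tm V Γ t` keeps `V` as a
parameter and records the bound variables in a list `Γ`; `toPCF` and `ofPCF` identify the two
presentations. Renaming and substitution make `Tm · []` a monad carrying the PCF operations.

For a representation `R`, preservation of `⇒`, `Bool` and `Nat` forces the map of sorts to be
`sortMap R`, and compatibility with the operations forces the monad morphism to be the
interpretation `sem` defined by structural recursion. That `sem` is natural and a colax monad
morphism amounts to its commuting with renaming and with substitution; under a binder both use
that `abs` is a module morphism.
-/

namespace PCF

section FamilyMonad

variable {T : Type}

def famHom {V W : T → Type} (f : ∀ t, V t → W t) : V ⟶ W :=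
  fun t => TypeCat.ofHom (f t)

variable (P : Monad (T → Type))

theorem map_map_apply {X Y Z : T → Type} (f : X ⟶ Y) (g : Y ⟶ Z) {t : T} (x : P.obj X t) :
    P.map g t (P.map f t x) = P.map (f ≫ g) t x := by
  rw [Functor.map_comp]; rfl

theorem map_eta_apply {X Y : T → Type} (f : X ⟶ Y) {t : T} (x : X t) :
    P.map f t (P.η.app X t x) = P.η.app Y t (f t x) :=
  (ConcreteCategory.congr_hom (congrFun (P.η.naturality f) t) x).symm

theorem map_mu_apply {X Y : T → Type} (f : X ⟶ Y) {t : T} (x : P.obj (P.obj X) t) :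
    P.map f t (P.μ.app X t x) = P.μ.app Y t (P.map (P.map f) t x) :=
  (ConcreteCategory.congr_hom (congrFun (P.μ.naturality f) t) x).symm

theorem mu_eta_apply {X : T → Type} {t : T} (x : P.obj X t) :
    P.μ.app X t (P.η.app (P.obj X) t x) = x :=
  ConcreteCategory.congr_hom (congrFun (P.left_unit X) t) x

end FamilyMonad

def extLift {T : Type} {V W : T → Type} (ρ : ∀ t, V t → W t) (u : T) :
    ∀ t, extC V u t → extC W u t
  | _, .inl x => .inl (ρ _ x)
  | _, .inr h => .inr h

theorem extLift_id {T : Type} {V : T → Type} (u : T) :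
    extLift (fun _ x => x : ∀ t, V t → V t) u = fun _ x => x := by
  funext t x; cases x <;> rfl

theorem retypeMap_extLift_dC {T T' : Type} (g : T → T') {V W : T → Type}
    (ρ : ∀ t, V t → W t) (u : T) :
    retypeMap g (famHom (extLift ρ u)) ≫ dC g W u =
      dC g V u ≫ extCMap (retypeMap g (famHom ρ)) (g u) := by
  funext t'; ext ⟨⟨s, hs⟩, x⟩
  cases x <;> rfl

def ctx (V : PcfTy → Type) : List PcfTy → PcfTy → Type
  | [] => V
  | u :: Γ => extC (ctx V Γ) u

inductive Tm (V : PcfTy → Type) : List PcfTy → PcfTy → Type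
  | var {Γ t} : ctx V Γ t → Tm V Γ t
  | bot {Γ} (t : PcfTy) : Tm V Γ t
  | app {Γ u v} : Tm V Γ (.arr u v) → Tm V Γ u → Tm V Γ v
  | lam {Γ u v} : Tm V (u :: Γ) v → Tm V Γ (.arr u v)
  | fixp {Γ t} : Tm V Γ (.arr t t) → Tm V Γ t
  | tt {Γ} : Tm V Γ .bool
  | ff {Γ} : Tm V Γ .bool
  | num {Γ} : ℕ → Tm V Γ .nat
  | succ {Γ} : Tm V Γ (.arr .nat .nat)
  | pred {Γ} : Tm V Γ (.arr .nat .nat)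
  | zero {Γ} : Tm V Γ (.arr .nat .bool)
  | condN {Γ} : Tm V Γ (.arr .bool (.arr .nat (.arr .nat .nat)))
  | condB {Γ} : Tm V Γ (.arr .bool (.arr .bool (.arr .bool .bool)))

namespace Tm

def liftRen {V W : PcfTy → Type} {Γ Δ : List PcfTy} (ρ : ∀ t, ctx V Γ t → ctx W Δ t)
    (u : PcfTy) : ∀ t, ctx V (u :: Γ) t → ctx W (u :: Δ) t :=
  extLift ρ u

def rename {V W : PcfTy → Type} {Γ Δ : List PcfTy} (ρ : ∀ t, ctx V Γ t → ctx W Δ t) :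
    ∀ {t}, Tm V Γ t → Tm W Δ t
  | _, var x => var (ρ _ x)
  | _, bot t => bot t
  | _, app a b => app (rename ρ a) (rename ρ b)
  | _, lam (u := u) m => lam (rename (liftRen ρ u) m)
  | _, fixp m => fixp (rename ρ m)
  | _, tt => tt
  | _, ff => ff
  | _, num n => num n
  | _, succ => succ
  | _, pred => pred
  | _, zero => zero
  | _, condN => condN
  | _, condB => condB

def liftSubst {V W : PcfTy → Type} {Γ Δ : List PcfTy} (σ : ∀ t, ctx V Γ t → Tm W Δ t)
    (u : PcfTy) : ∀ t, ctx V (u :: Γ) t → Tm W (u :: Δ) t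
  | _, .inl x => rename (Γ := Δ) (Δ := u :: Δ) (fun _ y => Sum.inl y) (σ _ x)
  | _, .inr h => var (Sum.inr h)

def subst {V W : PcfTy → Type} {Γ Δ : List PcfTy} (σ : ∀ t, ctx V Γ t → Tm W Δ t) :
    ∀ {t}, Tm V Γ t → Tm W Δ t
  | _, var x => σ _ x
  | _, bot t => bot t
  | _, app a b => app (subst σ a) (subst σ b)
  | _, lam (u := u) m => lam (subst (liftSubst σ u) m)
  | _, fixp m => fixp (subst σ m)
  | _, tt => tt
  | _, ff => ff
  | _, num n => num n
  | _, succ => succ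
  | _, pred => pred
  | _, zero => zero
  | _, condN => condN
  | _, condB => condB

variable {V W U : PcfTy → Type} {Γ Δ Θ : List PcfTy}

theorem liftRen_comp (ρ : ∀ t, ctx V Γ t → ctx W Δ t)
    (ρ' : ∀ t, ctx W Δ t → ctx U Θ t) (u : PcfTy) :
    (fun t x => liftRen ρ' u t (liftRen ρ u t x)) = liftRen (fun t x => ρ' t (ρ t x)) u := by
  funext t x; cases x <;> rfl

theorem rename_rename (ρ : ∀ t, ctx V Γ t → ctx W Δ t)
    (ρ' : ∀ t, ctx W Δ t → ctx U Θ t) {t} (m : Tm V Γ t) :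
    rename ρ' (rename ρ m) = rename (fun t x => ρ' t (ρ t x)) m := by
  induction m generalizing W U Δ Θ with
  | lam m ih => simp only [rename, ih, liftRen_comp]
  | _ => simp_all [rename]

theorem liftRen_id (u : PcfTy) :
    liftRen (fun _ x => x : ∀ t, ctx V Γ t → ctx V Γ t) u =
      (fun _ x => x : ∀ t, ctx V (u :: Γ) t → ctx V (u :: Γ) t) :=
  extLift_id u

theorem rename_id {t} (m : Tm V Γ t) : rename (fun _ x => x) m = m := by
  induction m with
  | lam m ih => simp only [rename, liftRen_id, ih]
  | _ => simp_all [rename]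

theorem liftSubst_liftRen (ρ : ∀ t, ctx V Γ t → ctx W Δ t)
    (σ : ∀ t, ctx W Δ t → Tm U Θ t) (u : PcfTy) :
    (fun t x => liftSubst σ u t (liftRen ρ u t x)) = liftSubst (fun t x => σ t (ρ t x)) u := by
  funext t x; cases x <;> rfl

theorem subst_rename (ρ : ∀ t, ctx V Γ t → ctx W Δ t)
    (σ : ∀ t, ctx W Δ t → Tm U Θ t) {t} (m : Tm V Γ t) :
    subst σ (rename ρ m) = subst (fun t x => σ t (ρ t x)) m := by
  induction m generalizing W U Δ Θ with
  | lam m ih => simp only [rename, subst, ih, liftSubst_liftRen]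
  | _ => simp_all [rename, subst]

theorem liftRen_liftSubst (σ : ∀ t, ctx V Γ t → Tm W Δ t)
    (ρ : ∀ t, ctx W Δ t → ctx U Θ t) (u : PcfTy) :
    (fun t x => rename (liftRen ρ u) (liftSubst σ u t x)) =
      liftSubst (fun t x => rename ρ (σ t x)) u := by
  funext t x
  cases x with
  | inl x => exact (rename_rename _ _ _).trans (rename_rename _ _ _).symm
  | inr h => rfl

theorem rename_subst (σ : ∀ t, ctx V Γ t → Tm W Δ t)
    (ρ : ∀ t, ctx W Δ t → ctx U Θ t) {t} (m : Tm V Γ t) :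
    rename ρ (subst σ m) = subst (fun t x => rename ρ (σ t x)) m := by
  induction m generalizing W U Δ Θ with
  | lam m ih => simp only [rename, subst, ih, liftRen_liftSubst]
  | _ => simp_all [rename, subst]

theorem liftSubst_comp (σ : ∀ t, ctx V Γ t → Tm W Δ t)
    (σ' : ∀ t, ctx W Δ t → Tm U Θ t) (u : PcfTy) :
    (fun t x => subst (liftSubst σ' u) (liftSubst σ u t x)) =
      liftSubst (fun t x => subst σ' (σ t x)) u := by
  funext t x
  cases x with
  | inl x => exact (subst_rename _ _ _).trans (rename_subst _ _ _).symm
  | inr h => rfl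

theorem subst_subst (σ : ∀ t, ctx V Γ t → Tm W Δ t)
    (σ' : ∀ t, ctx W Δ t → Tm U Θ t) {t} (m : Tm V Γ t) :
    subst σ' (subst σ m) = subst (fun t x => subst σ' (σ t x)) m := by
  induction m generalizing W U Δ Θ with
  | lam m ih => simp only [subst, ih, liftSubst_comp]
  | _ => simp_all [subst]

theorem liftSubst_var (u : PcfTy) :
    liftSubst (fun _ x => var x : ∀ t, ctx V Γ t → Tm V Γ t) u = fun _ x => var x := by
  funext t x; cases x <;> rfl

theorem subst_var {t} (m : Tm V Γ t) : subst (fun _ x => var x) m = m := by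
  induction m with
  | lam m ih => simp only [subst, liftSubst_var, ih]
  | _ => simp_all [subst]

def abs {V : PcfTy → Type} {u v : PcfTy} (m : Tm (extC V u) [] v) : Tm V [] (.arr u v) :=
  lam (rename (Γ := []) (Δ := [u]) (fun _ x => x) m)

end Tm

open Tm in
def termMonad : Monad (PcfTy → Type) where
  obj V t := Tm V [] t
  map f t := TypeCat.ofHom (rename (Γ := []) (Δ := []) fun s x => f s x)
  map_id V := by
    funext t; ext m; exact rename_id m
  map_comp f g := by
    funext t; ext m
    exact (rename_rename (Γ := []) (Δ := []) (Θ := []) (fun s x => f s x) (fun s x => g s x)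
      m).symm
  η :=
    { app V t := TypeCat.ofHom (var (Γ := []))
      naturality _ _ _ := rfl }
  μ :=
    { app V t := TypeCat.ofHom (subst (Γ := []) (Δ := []) fun _ x => x)
      naturality _ _ f := by
        funext t; ext m
        exact (subst_rename _ _ m).trans (rename_subst _ _ m).symm }
  assoc V := by
    funext t; ext m
    exact (subst_rename _ _ m).trans (subst_subst _ _ m).symm
  left_unit _ := rfl
  right_unit V := by
    funext t; ext m
    exact (subst_rename (Γ := []) (Δ := []) (Θ := []) (fun _ x => var x) (fun _ x => x) m).trans
      (subst_var m)

open Tm in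
def termRep : PCFRepOn PcfTy PcfTy.arr PcfTy.bool PcfTy.nat where
  P := termMonad
  app _ _ _ a b := app a b
  app_natural _ _ _ _ _ _ _ := rfl
  app_mod _ _ _ _ _ := rfl
  abs _ _ _ m := Tm.abs m
  abs_natural u v V W f m := by
    refine congrArg lam ((rename_rename _ _ m).trans (Eq.trans ?_ (rename_rename _ _ m).symm))
    congr 1; funext t x; cases x <;> rfl
  abs_mod u v V m := by
    refine congrArg lam (((congrArg _ (subst_rename _ _ m)).trans (rename_subst _ _ m)).trans
      (Eq.trans ?_ (subst_rename _ _ m).symm))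
    congr 1; funext t x
    cases x with
    | inl p => exact rename_rename _ _ p
    | inr h => rfl
  fixp _ _ m := fixp m
  fixp_natural _ _ _ _ _ := rfl
  fixp_mod _ _ _ := rfl
  tt _ := tt
  tt_natural _ := rfl
  tt_mod _ := rfl
  ff _ := ff
  ff_natural _ := rfl
  ff_mod _ := rfl
  num n _ := num n
  num_natural _ _ _ _ := rfl
  num_mod _ _ := rfl
  succ _ := succ
  succ_natural _ := rfl
  succ_mod _ := rfl
  pred _ := pred
  pred_natural _ := rfl
  pred_mod _ := rfl
  zero _ := zero
  zero_natural _ := rfl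
  zero_mod _ := rfl
  condN _ := condN
  condN_natural _ := rfl
  condN_mod _ := rfl
  condB _ := condB
  condB_natural _ := rfl
  condB_mod _ := rfl
  bot t _ := bot t
  bot_natural _ _ _ _ := rfl
  bot_mod _ _ := rfl

def _root_.PCFTm.rename :
    ∀ {V W : PcfTy → Type}, (∀ t, V t → W t) → ∀ {t}, PCFTm V t → PCFTm W t
  | _, _, ρ, _, .var x => .var (ρ _ x)
  | _, _, _, _, .bot t => .bot t
  | _, _, ρ, _, .app a b => .app (a.rename ρ) (b.rename ρ)
  | _, _, ρ, _, .lam (u := u) m => .lam (m.rename (extLift ρ u))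
  | _, _, ρ, _, .fixp m => .fixp (m.rename ρ)
  | _, _, _, _, .tt => .tt
  | _, _, _, _, .ff => .ff
  | _, _, _, _, .num n => .num n
  | _, _, _, _, .succ => .succ
  | _, _, _, _, .pred => .pred
  | _, _, _, _, .zero => .zero
  | _, _, _, _, .condN => .condN
  | _, _, _, _, .condB => .condB

theorem _root_.PCFTm.rename_id {V : PcfTy → Type} {t : PcfTy} (p : PCFTm V t) :
    p.rename (fun _ x => x) = p := by
  induction p with
  | lam m ih => simp only [PCFTm.rename, extLift_id, ih]
  | _ => simp_all [PCFTm.rename]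

def toPCF {V : PcfTy → Type} : ∀ {Γ : List PcfTy} {t : PcfTy}, Tm V Γ t → PCFTm (ctx V Γ) t
  | _, _, .var x => .var x
  | _, _, .bot t => .bot t
  | _, _, .app a b => .app (toPCF a) (toPCF b)
  | _, _, .lam m => .lam (toPCF m)
  | _, _, .fixp m => .fixp (toPCF m)
  | _, _, .tt => .tt
  | _, _, .ff => .ff
  | _, _, .num n => .num n
  | _, _, .succ => .succ
  | _, _, .pred => .pred
  | _, _, .zero => .zero
  | _, _, .condN => .condN
  | _, _, .condB => .condB

def ofPCF : ∀ {V : PcfTy → Type} {t : PcfTy}, PCFTm V t → Tm V [] t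
  | _, _, .var x => .var x
  | _, _, .bot t => .bot t
  | _, _, .app a b => .app (ofPCF a) (ofPCF b)
  | _, _, .lam m => .abs (ofPCF m)
  | _, _, .fixp m => .fixp (ofPCF m)
  | _, _, .tt => .tt
  | _, _, .ff => .ff
  | _, _, .num n => .num n
  | _, _, .succ => .succ
  | _, _, .pred => .pred
  | _, _, .zero => .zero
  | _, _, .condN => .condN
  | _, _, .condB => .condB

section Equiv

variable {V W : PcfTy → Type} {Γ Δ : List PcfTy}

theorem toPCF_rename (ρ : ∀ t, ctx V Γ t → ctx W Δ t) {t : PcfTy} (m : Tm V Γ t) :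
    toPCF (m.rename ρ) = (toPCF m).rename ρ := by
  induction m generalizing W Δ with
  | lam m ih => exact congrArg PCFTm.lam (ih _)
  | _ => simp_all [Tm.rename, toPCF, PCFTm.rename]

theorem toPCF_abs {u v : PcfTy} (m : Tm (extC V u) [] v) :
    toPCF m.abs = .lam (toPCF m) :=
  congrArg PCFTm.lam ((toPCF_rename _ m).trans (toPCF m).rename_id)

theorem toPCF_ofPCF {t : PcfTy} (p : PCFTm V t) : toPCF (ofPCF p) = p := by
  induction p with
  | app a b iha ihb => exact congrArg₂ PCFTm.app iha ihb
  | lam m ih => exact (toPCF_abs _).trans (congrArg PCFTm.lam ih)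
  | fixp m ih => exact congrArg PCFTm.fixp ih
  | _ => rfl

theorem ofPCF_toPCF {t : PcfTy} (m : Tm V Γ t) :
    (ofPCF (toPCF m)).rename (Γ := []) (Δ := Γ) (fun _ x => x) = m := by
  induction m with
  | lam m ih =>
    refine congrArg Tm.lam ((Tm.rename_rename _ _ _).trans (Eq.trans ?_ ih))
    congr 1; funext t x; cases x <;> rfl
  | _ => simp_all [Tm.rename, toPCF, ofPCF]

def termEquiv (V : PcfTy → Type) (t : PcfTy) : Tm V [] t ≃ PCFTm V t where
  toFun := toPCF
  invFun := ofPCF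
  left_inv m := (Tm.rename_id _).symm.trans (ofPCF_toPCF m)
  right_inv := toPCF_ofPCF

end Equiv

section Semantics

variable (R : PCFRep)

def sortMap : PcfTy → R.Sorts
  | .nat => R.nat
  | .bool => R.bool
  | .arr u v => R.arr (sortMap u) (sortMap v)

def sem {V : PcfTy → Type} :
    ∀ {Γ : List PcfTy} {t : PcfTy}, Tm V Γ t →
      R.str.P.obj (retypeObj (sortMap R) (ctx V Γ)) (sortMap R t)
  | Γ, t, .var x =>
      R.str.P.η.app (retypeObj (sortMap R) (ctx V Γ)) (sortMap R t) ⟨⟨t, rfl⟩, x⟩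
  | _, _, .bot t => R.str.bot (sortMap R t) _
  | _, _, .app (u := u) (v := v) a b => R.str.app (sortMap R u) (sortMap R v) _ (sem a) (sem b)
  | Γ, _, .lam (u := u) (v := v) m =>
      R.str.abs (sortMap R u) (sortMap R v) _
        (R.str.P.map (dC (sortMap R) (ctx V Γ) u) (sortMap R v) (sem m))
  | _, _, .fixp (t := t) m => R.str.fixp (sortMap R t) _ (sem m)
  | _, _, .tt => R.str.tt _
  | _, _, .ff => R.str.ff _
  | _, _, .num n => R.str.num n _
  | _, _, .succ => R.str.succ _
  | _, _, .pred => R.str.pred _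
  | _, _, .zero => R.str.zero _
  | _, _, .condN => R.str.condN _
  | _, _, .condB => R.str.condB _

variable {R}

theorem sem_rename {V W : PcfTy → Type} {Γ Δ : List PcfTy}
    (ρ : ∀ t, ctx V Γ t → ctx W Δ t) {t : PcfTy} (m : Tm V Γ t) :
    sem R (m.rename ρ) =
      R.str.P.map (retypeMap (sortMap R) (famHom ρ)) (sortMap R t) (sem R m) := by
  induction m generalizing W Δ with
  | var x =>
    exact (map_eta_apply R.str.P (retypeMap (sortMap R) (famHom ρ)) ⟨⟨_, rfl⟩, x⟩).symm
  | lam m ih =>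
    rename_i u v
    show R.str.abs _ _ _ (R.str.P.map _ _ (sem R (m.rename (Tm.liftRen ρ u)))) = _
    erw [ih, map_map_apply, retypeMap_extLift_dC, ← map_map_apply]
    exact R.str.abs_natural _ _ _ _
  | app a b iha ihb =>
    show R.str.app _ _ _ (sem R (a.rename ρ)) (sem R (b.rename ρ)) = _
    rw [iha, ihb]
    exact R.str.app_natural _ _ _ _ _
  | fixp m ih =>
    show R.str.fixp _ _ (sem R (m.rename ρ)) = _
    rw [ih]
    exact R.str.fixp_natural _ _ _
  | bot t => exact (R.str.bot_natural _ _).symm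
  | tt => exact (R.str.tt_natural _).symm
  | ff => exact (R.str.ff_natural _).symm
  | num n => exact (R.str.num_natural n _).symm
  | succ => exact (R.str.succ_natural _).symm
  | pred => exact (R.str.pred_natural _).symm
  | zero => exact (R.str.zero_natural _).symm
  | condN => exact (R.str.condN_natural _).symm
  | condB => exact (R.str.condB_natural _).symm

variable (R) in
def semSubst {V W : PcfTy → Type} {Γ Δ : List PcfTy} (σ : ∀ t, ctx V Γ t → Tm W Δ t) :
    retypeObj (sortMap R) (ctx V Γ) ⟶ R.str.P.obj (retypeObj (sortMap R) (ctx W Δ)) :=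
  fun _ => TypeCat.ofHom fun p =>
    cast (congrArg (R.str.P.obj (retypeObj (sortMap R) (ctx W Δ))) p.1.2) (sem R (σ p.1.1 p.2))

theorem semSubst_liftSubst {V W : PcfTy → Type} {Γ Δ : List PcfTy}
    (σ : ∀ t, ctx V Γ t → Tm W Δ t) (u : PcfTy) :
    semSubst R (Tm.liftSubst σ u) ≫ R.str.P.map (dC (sortMap R) (ctx W Δ) u) =
      (dC (sortMap R) (ctx V Γ) u ≫ extCMap (semSubst R σ) (sortMap R u)) ≫
        gammaC R.str.P (sortMap R u) (retypeObj (sortMap R) (ctx W Δ)) := by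
  funext t'; ext ⟨⟨s, hs⟩, x⟩
  cases hs
  cases x with
  | inl y =>
    have weaken_dC : retypeMap (sortMap R) (famHom (V := ctx W Δ) (W := ctx W (u :: Δ))
        fun _ z => Sum.inl z) ≫ dC (sortMap R) (ctx W Δ) u =
          famHom (W := extC (retypeObj (sortMap R) (ctx W Δ)) (sortMap R u))
            fun _ z => .inl z := by
      funext t'; ext ⟨⟨s', hs'⟩, y'⟩; rfl
    change R.str.P.map (dC (sortMap R) (ctx W Δ) u) (sortMap R s)
      (sem R ((σ s y).rename (Γ := Δ) (Δ := u :: Δ) fun _ z => Sum.inl z)) = _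
    erw [sem_rename, map_map_apply, weaken_dC]
    rfl
  | inr h => exact map_eta_apply R.str.P _ _

theorem sem_subst {V W : PcfTy → Type} {Γ Δ : List PcfTy} (σ : ∀ t, ctx V Γ t → Tm W Δ t)
    {t : PcfTy} (m : Tm V Γ t) :
    sem R (m.subst σ) =
      R.str.P.μ.app _ (sortMap R t) (R.str.P.map (semSubst R σ) (sortMap R t) (sem R m)) := by
  induction m generalizing W Δ with
  | var x =>
    refine Eq.symm ((congrArg (R.str.P.μ.app _ _) ?_).trans (mu_eta_apply R.str.P _))
    exact map_eta_apply R.str.P (semSubst R σ) ⟨⟨_, rfl⟩, x⟩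
  | lam m ih =>
    rename_i u v
    show R.str.abs _ _ _ (R.str.P.map _ _ (sem R (m.subst (Tm.liftSubst σ u)))) = _
    erw [ih, map_mu_apply, map_map_apply, semSubst_liftSubst, ← map_map_apply, ← map_map_apply]
    rw [R.str.abs_mod]
    exact congrArg _ (R.str.abs_natural _ _ (semSubst R σ) _)
  | app a b iha ihb =>
    show R.str.app _ _ _ (sem R (a.subst σ)) (sem R (b.subst σ)) = _
    rw [iha, ihb]
    exact (R.str.app_mod _ _ _ _ _).trans (congrArg _ (R.str.app_natural _ _ _ _ _))
  | fixp m ih =>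
    show R.str.fixp _ _ (sem R (m.subst σ)) = _
    rw [ih]
    exact (R.str.fixp_mod _ _ _).trans (congrArg _ (R.str.fixp_natural _ _ _))
  | bot t => exact (R.str.bot_mod _ _).symm.trans (congrArg _ (R.str.bot_natural _ _).symm)
  | tt => exact (R.str.tt_mod _).symm.trans (congrArg _ (R.str.tt_natural _).symm)
  | ff => exact (R.str.ff_mod _).symm.trans (congrArg _ (R.str.ff_natural _).symm)
  | num n => exact (R.str.num_mod n _).symm.trans (congrArg _ (R.str.num_natural n _).symm)
  | succ => exact (R.str.succ_mod _).symm.trans (congrArg _ (R.str.succ_natural _).symm)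
  | pred => exact (R.str.pred_mod _).symm.trans (congrArg _ (R.str.pred_natural _).symm)
  | zero => exact (R.str.zero_mod _).symm.trans (congrArg _ (R.str.zero_natural _).symm)
  | condN => exact (R.str.condN_mod _).symm.trans (congrArg _ (R.str.condN_natural _).symm)
  | condB => exact (R.str.condB_mod _).symm.trans (congrArg _ (R.str.condB_natural _).symm)

theorem sem_abs {V : PcfTy → Type} {u v : PcfTy} (m : Tm (extC V u) [] v) :
    sem R m.abs =
      R.str.abs _ _ _ (R.str.P.map (dC (sortMap R) V u) (sortMap R v) (sem R m)) := by
  change R.str.abs _ _ _ (R.str.P.map (dC (sortMap R) (ctx V []) u) _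
    (sem R (m.rename (Γ := []) (Δ := [u]) fun _ x => x))) = _
  erw [sem_rename, map_map_apply]
  rfl

end Semantics

def initialRep : PCFRep := ⟨PcfTy, PcfTy.arr, PcfTy.bool, PcfTy.nat, termRep⟩

def initialHom (R : PCFRep) : PCFRepHom initialRep R where
  g := sortMap R
  g_arr _ _ := rfl
  g_bool := rfl
  g_nat := rfl
  f V := semSubst R (V := fun t => Tm V [] t) (Γ := []) (Δ := []) fun _ x => x
  f_natural k := by
    funext t; ext ⟨⟨s, hs⟩, m⟩
    cases hs
    exact sem_rename (Γ := []) (Δ := []) (fun t x => k t x) m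
  f_unit V := by
    funext t; ext ⟨⟨s, hs⟩, v⟩
    cases hs
    rfl
  f_mul V := by
    funext t; ext ⟨⟨s, hs⟩, m⟩
    cases hs
    exact sem_subst _ m
  app_compat _ _ _ _ _ := rfl
  abs_compat _ _ _ m := sem_abs m
  fixp_compat _ _ _ := rfl
  tt_compat _ := rfl
  ff_compat _ := rfl
  num_compat _ _ := rfl
  succ_compat _ := rfl
  pred_compat _ := rfl
  zero_compat _ := rfl
  condN_compat _ := rfl
  condB_compat _ := rfl
  bot_compat _ _ := rfl

theorem eq_sortMap {R : PCFRep} (g : PcfTy → R.Sorts)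
    (g_arr : ∀ u v, g (.arr u v) = R.arr (g u) (g v)) (g_bool : g .bool = R.bool)
    (g_nat : g .nat = R.nat) : g = sortMap R := by
  funext s
  induction s with
  | nat => exact g_nat
  | bool => exact g_bool
  | arr u v ihu ihv => rw [g_arr, ihu, ihv]; rfl

-- `HEq`, because `h.g` agrees with `sortMap R` only propositionally (`eq_sortMap`).
theorem _root_.PCFRepHom.f_ofPCF_heq_sem {R : PCFRep} (h : PCFRepHom initialRep R)
    {V : PcfTy → Type} {t : PcfTy} (p : PCFTm V t) :
    HEq (h.f V (h.g t) ⟨⟨t, rfl⟩, ofPCF p⟩) (sem R (ofPCF p)) := by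
  obtain ⟨g, g_arr, g_bool, g_nat, f, -, f_unit, -, app_c, abs_c, fixp_c, tt_c, ff_c, num_c,
    succ_c, pred_c, zero_c, condN_c, condB_c, bot_c⟩ := h
  obtain rfl := eq_sortMap g g_arr g_bool g_nat
  refine heq_of_eq ?_
  induction p with
  | var x => exact ConcreteCategory.congr_hom (congrFun (f_unit _) _) ⟨⟨_, rfl⟩, x⟩
  | app a b iha ihb =>
    exact (app_c _ _ _ _ _).trans (congrArg₂ (R.str.app _ _ _) ((cast_eq _ _).trans iha) ihb)
  | lam m ih =>
    refine (abs_c _ _ _ _).trans ((cast_eq _ _).trans ?_)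
    erw [ih]
    exact (sem_abs _).symm
  | fixp m ih => exact (fixp_c _ _ _).trans (congrArg (R.str.fixp _ _) ((cast_eq _ _).trans ih))
  | bot t => exact bot_c t _
  | tt => exact (tt_c _).trans (cast_eq _ _)
  | ff => exact (ff_c _).trans (cast_eq _ _)
  | num n => exact (num_c n _).trans (cast_eq _ _)
  | succ => exact (succ_c _).trans (cast_eq _ _)
  | pred => exact (pred_c _).trans (cast_eq _ _)
  | zero => exact (zero_c _).trans (cast_eq _ _)
  | condN => exact (condN_c _).trans (cast_eq _ _)
  | condB => exact (condB_c _).trans (cast_eq _ _)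

theorem eq_initialHom {R : PCFRep} (h : PCFRepHom initialRep R) : h = initialHom R := by
  have agree := @PCFRepHom.f_ofPCF_heq_sem R h
  obtain ⟨g, g_arr, g_bool, g_nat, f⟩ := h
  obtain rfl := eq_sortMap g g_arr g_bool g_nat
  obtain rfl : f = (initialHom R).f := by
    funext V t; ext ⟨⟨s, hs⟩, m⟩
    cases hs
    obtain ⟨p, rfl⟩ := (termEquiv V s).symm.surjective m
    exact eq_of_heq (agree p)
  rfl

end PCF

/-- The category of representations of PCF has an initial object: its sorts are the
PCF types `T_PCF ::= Nat | Bool | T_PCF ⇒ T_PCF`, its monad is the intrinsically typed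
PCF term monad, and its representation structure is given by the syntactic
constructors (the monad unit being the variables-as-terms constructor). -/
theorem pcfRep_initial :
    ∃ R₀ : PCFRepOn PcfTy PcfTy.arr PcfTy.bool PcfTy.nat,
      (∀ R : PCFRep,
        ∃! _ : PCFRepHom ⟨PcfTy, PcfTy.arr, PcfTy.bool, PcfTy.nat, R₀⟩ R, True) ∧
      ∃ e : ∀ (V : PcfTy → Type) (t : PcfTy), R₀.P.obj V t ≃ PCFTm V t,
        (∀ (V : PcfTy → Type) (t : PcfTy) (v : V t),
          e V t (R₀.P.η.app V t v) = .var v) ∧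
        (∀ (u v : PcfTy) (V : PcfTy → Type) (a : R₀.P.obj V (PcfTy.arr u v))
            (b : R₀.P.obj V u),
          e V v (R₀.app u v V a b) = .app (e V (PcfTy.arr u v) a) (e V u b)) ∧
        (∀ (u v : PcfTy) (V : PcfTy → Type) (m : R₀.P.obj (extC V u) v),
          e V (PcfTy.arr u v) (R₀.abs u v V m) = .lam (e (extC V u) v m)) ∧
        (∀ (t : PcfTy) (V : PcfTy → Type) (m : R₀.P.obj V (PcfTy.arr t t)),
          e V t (R₀.fixp t V m) = .fixp (e V (PcfTy.arr t t) m)) ∧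
        (∀ V : PcfTy → Type, e V PcfTy.bool (R₀.tt V) = .tt) ∧
        (∀ V : PcfTy → Type, e V PcfTy.bool (R₀.ff V) = .ff) ∧
        (∀ (n : ℕ) (V : PcfTy → Type), e V PcfTy.nat (R₀.num n V) = .num n) ∧
        (∀ V : PcfTy → Type,
          e V (PcfTy.arr PcfTy.nat PcfTy.nat) (R₀.succ V) = .succ) ∧
        (∀ V : PcfTy → Type,
          e V (PcfTy.arr PcfTy.nat PcfTy.nat) (R₀.pred V) = .pred) ∧
        (∀ V : PcfTy → Type,
          e V (PcfTy.arr PcfTy.nat PcfTy.bool) (R₀.zero V) = .zero) ∧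
        (∀ V : PcfTy → Type,
          e V (PcfTy.arr PcfTy.bool (PcfTy.arr PcfTy.nat
            (PcfTy.arr PcfTy.nat PcfTy.nat))) (R₀.condN V) = .condN) ∧
        (∀ V : PcfTy → Type,
          e V (PcfTy.arr PcfTy.bool (PcfTy.arr PcfTy.bool
            (PcfTy.arr PcfTy.bool PcfTy.bool))) (R₀.condB V) = .condB) ∧
        (∀ (t : PcfTy) (V : PcfTy → Type), e V t (R₀.bot t V) = .bot t) := by
  refine ⟨PCF.termRep, fun R => ⟨PCF.initialHom R, trivial, fun h _ => PCF.eq_initialHom h⟩,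
    PCF.termEquiv, fun _ _ _ => rfl, fun _ _ _ _ _ => rfl, fun _ _ _ m => PCF.toPCF_abs m,
    fun _ _ _ => rfl, fun _ => rfl, fun _ => rfl, fun _ _ => rfl, fun _ => rfl, fun _ => rfl,
    fun _ => rfl, fun _ => rfl, fun _ => rfl, fun _ _ => rfl⟩
end
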